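/- arXiv:2602.14213 — 10 statements merged into one kernel-verified Lean document; each statement's English description precedes it below -/
import Mathlib

section
/- The linear system Mx = b over the ring ℤ/p^kℤ has a solution if and only if the matrices M and the augmented matrix (M, b) have the same invariant factors (equivalently, the same Smith normal form). -/
/-!
Over `ℤ/p^kℤ`, a quotient of the valuation ring `ℤ_[p]`, divisibility is total. Hence every
nonzero matrix has an entry dividing all the others, and elimination around that pivot yields a
Smith normal form. If `b = M x`, a column operation clears the last column of `(M | b)`, whose
normal form is then that of `M`. Conversely, equivalent matrices have column spaces of the same
size, and the normal form of `(M | b)` is that of `M` with a zero column appended; so the finite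
column space of `(M | b)` contains that of `M` and has the same cardinality, hence equals it, and
`b` lies in the column space of `M`.
-/

/-- The `m × n` matrix with diagonal entries `d 0, …, d (r-1)` in the top-left
corner and zeros elsewhere (a Smith-normal-form shaped matrix). -/
def snfMat {R : Type*} [Zero R] (m n r : ℕ) (d : Fin r → R) :
    Matrix (Fin m) (Fin n) R :=
  Matrix.of fun i j => if h : (i : ℕ) = (j : ℕ) ∧ (i : ℕ) < r then d ⟨i, h.2⟩ else 0

/-- `M` is equivalent (via invertible matrices) to the SNF-shaped matrix with
diagonal entries `d`. -/
def HasSNF {R : Type*} [CommRing R] {m n r : ℕ}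
    (M : Matrix (Fin m) (Fin n) R) (d : Fin r → R) : Prop :=
  ∃ (U : Matrix (Fin m) (Fin m) R) (V : Matrix (Fin n) (Fin n) R),
    IsUnit U.det ∧ IsUnit V.det ∧ U * M * V = snfMat m n r d

open Matrix

section Equivalence

variable {R : Type*} [CommRing R] {m n r : ℕ} {M : Matrix (Fin m) (Fin n) R} {d : Fin r → R}

lemma HasSNF.of_mul_mul {U₀ : Matrix (Fin m) (Fin m) R} {V₀ : Matrix (Fin n) (Fin n) R}
    (h : HasSNF (U₀ * M * V₀) d) (hU₀ : IsUnit U₀.det) (hV₀ : IsUnit V₀.det) :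
    HasSNF M d := by
  obtain ⟨U, V, hU, hV, hUV⟩ := h
  refine ⟨U * U₀, V₀ * V, by simpa using hU.mul hU₀, by simpa using hV₀.mul hV, ?_⟩
  simpa only [Matrix.mul_assoc] using hUV

lemma HasSNF.of_submatrix (e : Equiv.Perm (Fin m)) (f : Equiv.Perm (Fin n))
    (h : HasSNF (M.submatrix e f) d) : HasSNF M d := by
  have hsign : ∀ {k : ℕ} (σ : Equiv.Perm (Fin k)), IsUnit (σ.permMatrix R).det := fun σ => by
    rw [det_permutation]
    exact (Equiv.Perm.sign σ).isUnit.map (Int.castRingHom R)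
  have hperm : e.permMatrix R * M * f⁻¹.permMatrix R = M.submatrix e f := by
    rw [PEquiv.toMatrix_toPEquiv_mul, PEquiv.mul_toMatrix_toPEquiv, submatrix_submatrix]
    rfl
  exact HasSNF.of_mul_mul (hperm ▸ h) (hsign e) (hsign f⁻¹)

lemma HasSNF.dvd_of_forall_dvd {a : R} (h : HasSNF M d) (hr : r ≤ min m n)
    (ha : ∀ i j, a ∣ M i j) (i : Fin r) : a ∣ d i := by
  obtain ⟨U, V, -, -, hUV⟩ := h
  have hUMV : ∀ i j, a ∣ (U * M * V) i j := fun i j => by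
    simp only [mul_apply]
    exact Finset.dvd_sum fun t _ => dvd_mul_of_dvd_left
      (Finset.dvd_sum fun s _ => dvd_mul_of_dvd_right (ha s t) _) _
  simpa [hUV, snfMat] using hUMV ⟨i, by omega⟩ ⟨i, by omega⟩

end Equivalence

section BlockDiagCons

variable {R : Type*} [CommRing R] {m n : ℕ}

/-- The block matrix `[[a, 0], [0, B]]`. -/
def blockDiagCons (a : R) (B : Matrix (Fin m) (Fin n) R) : Matrix (Fin (m + 1)) (Fin (n + 1)) R :=
  of fun i j => Fin.cases (Fin.cases a (fun _ => 0) j) (fun i' => Fin.cases 0 (B i') j) i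

@[simp] lemma blockDiagCons_zero_zero (a : R) (B : Matrix (Fin m) (Fin n) R) :
    blockDiagCons a B 0 0 = a := rfl

@[simp] lemma blockDiagCons_zero_succ (a : R) (B : Matrix (Fin m) (Fin n) R) (j : Fin n) :
    blockDiagCons a B 0 j.succ = 0 := rfl

@[simp] lemma blockDiagCons_succ_zero (a : R) (B : Matrix (Fin m) (Fin n) R) (i : Fin m) :
    blockDiagCons a B i.succ 0 = 0 := rfl

@[simp] lemma blockDiagCons_succ_succ (a : R) (B : Matrix (Fin m) (Fin n) R) (i : Fin m)
    (j : Fin n) : blockDiagCons a B i.succ j.succ = B i j := rfl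

lemma eq_blockDiagCons (N : Matrix (Fin (m + 1)) (Fin (n + 1)) R)
    (hrow : ∀ j, N 0 (Fin.succ j) = 0) (hcol : ∀ i, N (Fin.succ i) 0 = 0) :
    N = blockDiagCons (N 0 0) (N.submatrix Fin.succ Fin.succ) := by
  ext i j
  cases i using Fin.cases <;> cases j using Fin.cases <;> simp [hrow, hcol]

lemma blockDiagCons_mul_blockDiagCons {l : ℕ} (a b : R) (A : Matrix (Fin l) (Fin m) R)
    (B : Matrix (Fin m) (Fin n) R) :
    blockDiagCons a A * blockDiagCons b B = blockDiagCons (a * b) (A * B) := by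
  ext i j
  cases i using Fin.cases <;> cases j using Fin.cases <;> simp [mul_apply, Fin.sum_univ_succ]

lemma det_blockDiagCons (a : R) (A : Matrix (Fin m) (Fin m) R) :
    (blockDiagCons a A).det = a * A.det := by
  have hminor : (blockDiagCons a A).submatrix Fin.succ Fin.succ = A := rfl
  rw [det_succ_row_zero, Fin.sum_univ_succ]
  simp [hminor]

lemma snfMat_cons {r : ℕ} (a : R) (d : Fin r → R) :
    snfMat (m + 1) (n + 1) (r + 1) (Fin.cons a d) = blockDiagCons a (snfMat m n r d) := by
  ext i j
  cases i using Fin.cases <;> cases j using Fin.cases <;> simp [snfMat, Fin.cons]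

lemma HasSNF.blockDiagCons {r : ℕ} {B : Matrix (Fin m) (Fin n) R} {d : Fin r → R} (a : R)
    (h : HasSNF B d) : HasSNF (blockDiagCons a B) (Fin.cons a d) := by
  obtain ⟨U, V, hU, hV, hUV⟩ := h
  refine ⟨_root_.blockDiagCons 1 U, _root_.blockDiagCons 1 V,
    by simpa [det_blockDiagCons] using hU, by simpa [det_blockDiagCons] using hV, ?_⟩
  rw [blockDiagCons_mul_blockDiagCons, blockDiagCons_mul_blockDiagCons, hUV, snfMat_cons,
    one_mul, mul_one]

end BlockDiagCons

section Elimination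

variable {R : Type*} [CommRing R] {m n : ℕ}

lemma det_one_sub_vecMulVec (u v : Fin m → R) : (1 - vecMulVec u v).det = 1 - v ⬝ᵥ u := by
  rw [sub_eq_add_neg, ← neg_vecMulVec, vecMulVec_eq Unit,
    det_one_add_replicateCol_mul_replicateRow, dotProduct_neg, sub_eq_add_neg]

lemma exists_mul_mul_eq_blockDiagCons (M : Matrix (Fin (m + 1)) (Fin (n + 1)) R)
    (hrow : ∀ j, M 0 0 ∣ M 0 j) (hcol : ∀ i, M 0 0 ∣ M i 0) :
    ∃ (U : Matrix (Fin (m + 1)) (Fin (m + 1)) R) (V : Matrix (Fin (n + 1)) (Fin (n + 1)) R)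
      (B : Matrix (Fin m) (Fin n) R),
      IsUnit U.det ∧ IsUnit V.det ∧ U * M * V = blockDiagCons (M 0 0) B := by
  choose g hg using hrow
  choose c hc using hcol
  set u : Fin (m + 1) → R := Fin.cons 0 (c ∘ Fin.succ)
  set w : Fin (n + 1) → R := Fin.cons 0 (g ∘ Fin.succ)
  set U := 1 - vecMulVec u (Pi.single 0 1 : Fin (m + 1) → R)
  set V := 1 - vecMulVec (Pi.single 0 1 : Fin (n + 1) → R) w
  -- `U` subtracts `c i` times row `0` from row `i`, `V` subtracts `g j` times column `0` from
  -- column `j`.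
  have hUMV : ∀ i j, (U * M * V) i j = M i j - u i * M 0 j - (M i 0 - u i * M 0 0) * w j := by
    intro i j
    simp [U, V, Matrix.sub_mul, Matrix.mul_sub, vecMulVec_mul, mul_vecMulVec, vecMulVec_apply]
  have hrow₀ : ∀ j : Fin n, (U * M * V) 0 j.succ = 0 := fun j => by simp [hUMV, u, w, hg j.succ]
  have hcol₀ : ∀ i : Fin m, (U * M * V) i.succ 0 = 0 := fun i => by
    simp [hUMV, u, w, hc i.succ, mul_comm]
  have hpivot : (U * M * V) 0 0 = M 0 0 := by simp [hUMV, u, w]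
  refine ⟨U, V, _, ?_, ?_, hpivot ▸ eq_blockDiagCons (U * M * V) hrow₀ hcol₀⟩
  · simp [U, det_one_sub_vecMulVec, u]
  · simp [V, det_one_sub_vecMulVec, w]

end Elimination

section Existence

lemma Finset.exists_mem_forall_dvd {R ι : Type*} [Monoid R] [PreValuationRing R] (s : Finset ι)
    (hs : s.Nonempty) (f : ι → R) : ∃ i ∈ s, ∀ j ∈ s, f i ∣ f j := by
  induction hs using Finset.Nonempty.cons_induction with
  | singleton a => exact ⟨a, by simp⟩
  | cons a s _ _ ih =>
    obtain ⟨i, hi, hdvd⟩ := ih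
    rcases ValuationRing.dvd_total (f a) (f i) with h | h
    · exact ⟨a, by simp, by simpa using fun j hj => h.trans (hdvd j hj)⟩
    · exact ⟨i, by simp [hi], by simpa using ⟨h, hdvd⟩⟩

lemma dvd_chain_cons {R : Type*} [Monoid R] {r : ℕ} {a : R} {d : Fin r → R}
    (ha : ∀ i, a ∣ d i) (hd : ∀ i j : Fin r, i ≤ j → d i ∣ d j) :
    ∀ i j : Fin (r + 1), i ≤ j →
      (Fin.cons a d : Fin (r + 1) → R) i ∣ (Fin.cons a d : Fin (r + 1) → R) j := by
  intro i j hij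
  cases i using Fin.cases <;> cases j using Fin.cases
  · rfl
  · simpa using ha _
  · exact absurd hij (by simp)
  · simpa using hd _ _ (by simpa using hij)

variable {R : Type*} [CommRing R]

lemma HasSNF.zero {m n : ℕ} : HasSNF (0 : Matrix (Fin m) (Fin n) R) (Fin.elim0 : Fin 0 → R) :=
  ⟨1, 1, by simp, by simp, by ext; simp [snfMat]⟩

theorem exists_hasSNF [PreValuationRing R] {m n : ℕ} (M : Matrix (Fin m) (Fin n) R) :
    ∃ (r : ℕ) (d : Fin r → R), r ≤ min m n ∧ (∀ i, d i ≠ 0) ∧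
      (∀ i j : Fin r, i ≤ j → d i ∣ d j) ∧ HasSNF M d := by
  induction m generalizing n with
  | zero => exact ⟨0, Fin.elim0, by omega, nofun, nofun, Subsingleton.elim 0 M ▸ .zero⟩
  | succ m ih =>
    rcases n with _ | n
    · exact ⟨0, Fin.elim0, by omega, nofun, nofun, Subsingleton.elim 0 M ▸ .zero⟩
    by_cases hM : M = 0
    · exact ⟨0, Fin.elim0, by omega, nofun, nofun, hM ▸ .zero⟩
    obtain ⟨⟨i₀, j₀⟩, -, hpivot⟩ :=
      Finset.univ.exists_mem_forall_dvd Finset.univ_nonempty (Function.uncurry M)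
    set a := M i₀ j₀
    have ha : ∀ i j, a ∣ M i j := fun i j => hpivot (i, j) (Finset.mem_univ _)
    have ha₀ : a ≠ 0 := fun h => hM (ext fun i j => zero_dvd_iff.mp (h ▸ ha i j))
    set M₁ := M.submatrix (Equiv.swap 0 i₀) (Equiv.swap 0 j₀)
    have hM₁ : M₁ 0 0 = a := by simp [M₁, a]
    obtain ⟨U, V, B, hU, hV, hUV⟩ :=
      exists_mul_mul_eq_blockDiagCons M₁ (fun j => hM₁ ▸ ha _ _) (fun i => hM₁ ▸ ha _ _)
    obtain ⟨r, d, hr, hd₀, hd, hB⟩ := ih B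
    have hsnf : HasSNF M (Fin.cons a d) :=
      .of_submatrix _ _ (.of_mul_mul (hUV ▸ hM₁ ▸ hB.blockDiagCons a) hU hV)
    have had : ∀ i, a ∣ d i := fun i => by
      simpa using hsnf.dvd_of_forall_dvd (by omega) ha i.succ
    exact ⟨r + 1, Fin.cons a d, by omega, Fin.cases ha₀ hd₀, dvd_chain_cons had hd, hsnf⟩

end Existence

section AppendCol

variable {R : Type*} [CommRing R] {m n : ℕ}

def appendCol (M : Matrix (Fin m) (Fin n) R) (b : Fin m → R) : Matrix (Fin m) (Fin (n + 1)) R :=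
  of fun i j => Fin.lastCases (b i) (fun j' => M i j') j

/-- The block matrix `[[V, w], [0, 1]]`. -/
def blockUpperSnoc (V : Matrix (Fin n) (Fin n) R) (w : Fin n → R) :
    Matrix (Fin (n + 1)) (Fin (n + 1)) R :=
  of fun s t => Fin.lastCases (Fin.lastCases 1 w s) (fun t' => Fin.lastCases 0 (V · t') s) t

lemma appendCol_mulVec (M : Matrix (Fin m) (Fin n) R) (b : Fin m → R) (x : Fin (n + 1) → R) :
    appendCol M b *ᵥ x = M *ᵥ Fin.init x + x (Fin.last n) • b := by
  ext i
  simp [appendCol, mulVec, dotProduct, Fin.sum_univ_castSucc, Fin.init, mul_comm]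

lemma range_mulVec_subset_appendCol (M : Matrix (Fin m) (Fin n) R) (b : Fin m → R) :
    Set.range M.mulVec ⊆ Set.range (appendCol M b).mulVec := by
  rintro _ ⟨x, rfl⟩
  exact ⟨Fin.snoc x 0, by simp [appendCol_mulVec]⟩

lemma mem_range_appendCol_mulVec (M : Matrix (Fin m) (Fin n) R) (b : Fin m → R) :
    b ∈ Set.range (appendCol M b).mulVec :=
  ⟨Pi.single (Fin.last n) 1, by ext; simp [appendCol]⟩

lemma range_appendCol_zero_mulVec (M : Matrix (Fin m) (Fin n) R) :
    Set.range (appendCol M 0).mulVec = Set.range M.mulVec := by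
  refine Set.Subset.antisymm (Set.range_subset_iff.mpr fun x => ⟨Fin.init x, ?_⟩)
    (range_mulVec_subset_appendCol M 0)
  simp [appendCol_mulVec]

lemma mul_appendCol (U : Matrix (Fin m) (Fin m) R) (M : Matrix (Fin m) (Fin n) R)
    (b : Fin m → R) : U * appendCol M b = appendCol (U * M) (U *ᵥ b) := by
  ext i j
  cases j using Fin.lastCases <;> simp [appendCol, mul_apply, mulVec, dotProduct]

lemma appendCol_mul_blockUpperSnoc (M : Matrix (Fin m) (Fin n) R) (b : Fin m → R)
    (V : Matrix (Fin n) (Fin n) R) (w : Fin n → R) :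
    appendCol M b * blockUpperSnoc V w = appendCol (M * V) (M *ᵥ w + b) := by
  ext i j
  cases j using Fin.lastCases <;>
    simp [appendCol, blockUpperSnoc, mul_apply, mulVec, dotProduct, Fin.sum_univ_castSucc]

lemma det_blockUpperSnoc (V : Matrix (Fin n) (Fin n) R) (w : Fin n → R) :
    (blockUpperSnoc V w).det = V.det := by
  have hminor : (blockUpperSnoc V w).submatrix Fin.castSucc Fin.castSucc = V := by
    ext; simp [blockUpperSnoc]
  rw [det_succ_row _ (Fin.last n), Fin.sum_univ_castSucc, Fin.succAbove_last, hminor]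
  simp [blockUpperSnoc]

lemma appendCol_snfMat_zero {r : ℕ} (hr : r ≤ n) (d : Fin r → R) :
    appendCol (snfMat m n r d) 0 = snfMat m (n + 1) r d := by
  ext i j
  cases j using Fin.lastCases
  · simp only [appendCol, snfMat, of_apply, Fin.lastCases_last, Pi.zero_apply, Fin.val_last]
    rw [dif_neg (show ¬((i : ℕ) = n ∧ (i : ℕ) < r) by omega)]
  · simp [appendCol, snfMat]

lemma HasSNF.appendCol_mulVec {r : ℕ} {M : Matrix (Fin m) (Fin n) R} {d : Fin r → R}
    (h : HasSNF M d) (hr : r ≤ n) (x : Fin n → R) : HasSNF (appendCol M (M *ᵥ x)) d := by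
  obtain ⟨U, V, hU, hV, hUV⟩ := h
  refine ⟨U, blockUpperSnoc V (-x), hU, by rwa [det_blockUpperSnoc], ?_⟩
  rw [Matrix.mul_assoc, appendCol_mul_blockUpperSnoc, mulVec_neg, neg_add_cancel, mul_appendCol,
    mulVec_zero, ← Matrix.mul_assoc, hUV, appendCol_snfMat_zero hr]

lemma HasSNF.ncard_range_mulVec {r : ℕ} {M : Matrix (Fin m) (Fin n) R} {d : Fin r → R}
    (h : HasSNF M d) :
    (Set.range M.mulVec).ncard = (Set.range (snfMat m n r d).mulVec).ncard := by
  obtain ⟨U, V, hU, hV, hUV⟩ := h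
  have hVsurj : Function.Surjective V.mulVec :=
    mulVec_surjective_iff_isUnit.mpr ((isUnit_iff_isUnit_det V).mpr hV)
  have hrange : Set.range (snfMat m n r d).mulVec = U.mulVec '' Set.range M.mulVec := by
    have hcomp : (U * M * V).mulVec = (U.mulVec ∘ M.mulVec) ∘ V.mulVec := by
      ext x : 1
      simp [mulVec_mulVec, Matrix.mul_assoc]
    rw [← hUV, hcomp, hVsurj.range_comp, Set.range_comp]
  rw [hrange, Set.ncard_image_of_injective _
    (mulVec_injective_of_isUnit ((isUnit_iff_isUnit_det U).mpr hU))]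

theorem mem_range_mulVec_of_hasSNF_appendCol [Finite R] {r : ℕ} {M : Matrix (Fin m) (Fin n) R}
    {b : Fin m → R} {d : Fin r → R} (hM : HasSNF M d) (hMb : HasSNF (appendCol M b) d)
    (hr : r ≤ n) : b ∈ Set.range M.mulVec := by
  have hcard : (Set.range (appendCol M b).mulVec).ncard ≤ (Set.range M.mulVec).ncard := by
    rw [hMb.ncard_range_mulVec, hM.ncard_range_mulVec, ← appendCol_snfMat_zero hr,
      range_appendCol_zero_mulVec]
  rw [Set.eq_of_subset_of_ncard_le (range_mulVec_subset_appendCol M b) hcard]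
  exact mem_range_appendCol_mulVec M b

end AppendCol

instance ZMod.preValuationRing_primePow {p : ℕ} [Fact p.Prime] (k : ℕ) :
    PreValuationRing (ZMod (p ^ k)) :=
  (ZMod.ringHom_surjective (PadicInt.toZModPow k)).preValuationRing
    (PadicInt.toZModPow (p := p) k).toMulHom

theorem linear_system_solvable_iff_same_invariant_factors_general
    {p k m n : ℕ} (hp : p.Prime)
    (M : Matrix (Fin m) (Fin n) (ZMod (p ^ k))) (b : Fin m → ZMod (p ^ k)) :
    (∃ x : Fin n → ZMod (p ^ k), M.mulVec x = b) ↔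
      ∃ (r : ℕ) (d : Fin r → ZMod (p ^ k)),
        r ≤ min m n ∧ (∀ i, d i ≠ 0) ∧ (∀ i j : Fin r, i ≤ j → d i ∣ d j) ∧
        HasSNF M d ∧
        HasSNF (Matrix.of fun i (j : Fin (n + 1)) =>
          Fin.lastCases (b i) (fun j' => M i j') j) d := by
  have : Fact p.Prime := ⟨hp⟩
  have : NeZero (p ^ k) := ⟨pow_ne_zero k hp.ne_zero⟩
  constructor
  · rintro ⟨x, rfl⟩
    obtain ⟨r, d, hr, hd₀, hd, hM⟩ := exists_hasSNF M
    exact ⟨r, d, hr, hd₀, hd, hM, hM.appendCol_mulVec (by omega) x⟩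
  · rintro ⟨r, d, hr, -, -, hM, hMb⟩
    exact mem_range_mulVec_of_hasSNF_appendCol hM hMb (by omega)

/-- The linear system `M x = b` over `ℤ/p^kℤ` has a solution iff `M` and the
augmented matrix `(M, b)` have the same invariant factors. -/
theorem linear_system_solvable_iff_same_invariant_factors
    {p k m n : ℕ} (hp : p.Prime) (hk : 1 ≤ k)
    (M : Matrix (Fin m) (Fin n) (ZMod (p ^ k))) (b : Fin m → ZMod (p ^ k)) :
    (∃ x : Fin n → ZMod (p ^ k), M.mulVec x = b) ↔
      ∃ (r : ℕ) (d : Fin r → ZMod (p ^ k)),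
        r ≤ min m n ∧ (∀ i, d i ≠ 0) ∧ (∀ i j : Fin r, i ≤ j → d i ∣ d j) ∧
        HasSNF M d ∧
        HasSNF (Matrix.of fun i (j : Fin (n + 1)) =>
          Fin.lastCases (b i) (fun j' => M i j') j) d :=
  linear_system_solvable_iff_same_invariant_factors_general hp M b
end

section
/- Let M be an m × n matrix over ℤ/p^kℤ with invariant factors p^{c_1}, …, p^{c_r} where 0 ≤ c_1 ≤ … ≤ c_r < k. Then the kernel of M (as a map (ℤ/p^kℤ)^n → (ℤ/p^kℤ)^m) is isomorphic to (⊕_{i=1}^r ℤ/p^{c_i}ℤ) ⊕ (ℤ/p^kℤ)^{n−r}. -/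
/-!
Invertible `U`, `V` do not change the kernel up to isomorphism (`x ↦ V x` identifies
`ker (U M V)` with `ker M`), so `M` may be replaced by its Smith form `D`. A vector lies in
`ker D` iff its `i`-th coordinate is killed by `p ^ cᵢ` for `i < r`, the last `n - r`
coordinates being free. In `ℤ/p^kℤ` the `p ^ c`-torsion is the ideal `(p ^ (k - c))`, the image
of multiplication by `p ^ (k - c)`, whose kernel is `(p ^ c)`; hence it is `≅ ℤ/p^kℤ ⧸ (p ^ c)`.
-/

namespace Matrix

variable {R : Type*} [CommRing R] {m n : Type*} [Fintype m] [DecidableEq m]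
  [Fintype n] [DecidableEq n]

noncomputable def kerMulVecLinEquivOfIsUnitDet (M : Matrix m n R) {U : Matrix m m R}
    {V : Matrix n n R} (hU : IsUnit U.det) (hV : IsUnit V.det) :
    LinearMap.ker (U * M * V).mulVecLin ≃ₗ[R] LinearMap.ker M.mulVecLin :=
  letI := V.invertibleOfIsUnitDet hV
  have hker : LinearMap.ker (U * M * V).mulVecLin =
      (LinearMap.ker M.mulVecLin).comap (V.toLinearEquiv' ‹_› : (n → R) →ₗ[R] n → R) := by
    rw [Matrix.mul_assoc, mulVecLin_mul, LinearMap.ker_comp_of_ker_eq_bot _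
      (LinearMap.ker_eq_bot.mpr (mulVec_injective_of_isUnit ((isUnit_iff_isUnit_det U).mpr hU))),
      mulVecLin_mul]
    rfl
  LinearEquiv.ofEq _ _ hker ≪≫ₗ (V.toLinearEquiv' _).ofSubmodule' _

end Matrix

section snfMat

variable {R : Type*} [CommRing R] {m r s : ℕ}

theorem snfMat_mulVec (d : Fin r → R) (x : Fin (r + s) → R) (i : Fin m) :
    (snfMat m (r + s) r d).mulVec x i =
      if h : (i : ℕ) < r then d ⟨i, h⟩ * x (Fin.castAdd s ⟨i, h⟩) else 0 := by
  simp only [snfMat, Matrix.mulVec, dotProduct, Matrix.of_apply]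
  split_ifs with h
  · rw [Finset.sum_eq_single (Fin.castAdd s ⟨i, h⟩)]
    · simp [h]
    · intro j _ hj
      rw [dif_neg (fun hij => hj (Fin.ext hij.1.symm)), zero_mul]
    · simp [h]
  · exact Finset.sum_eq_zero fun j _ => by rw [dif_neg (fun hij => h hij.2), zero_mul]

theorem mem_ker_snfMat_mulVecLin (hrm : r ≤ m) (d : Fin r → R) (x : Fin (r + s) → R) :
    x ∈ LinearMap.ker (snfMat m (r + s) r d).mulVecLin ↔
      ∀ i, x (Fin.castAdd s i) ∈ Submodule.torsionBy R R (d i) := by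
  simp_rw [LinearMap.mem_ker, funext_iff, Matrix.mulVecLin_apply, snfMat_mulVec,
    Submodule.mem_torsionBy_iff, smul_eq_mul, Pi.zero_apply]
  constructor
  · intro h i
    simpa using h (Fin.castLE hrm i)
  · intro h i
    split_ifs
    exacts [h _, rfl]

noncomputable def kerSnfMatEquiv (hrm : r ≤ m) (d : Fin r → R) :
    LinearMap.ker (snfMat m (r + s) r d).mulVecLin ≃ₗ[R]
      ((i : Fin r) → Submodule.torsionBy R R (d i)) × (Fin s → R) where
  toFun x := (fun i => ⟨x.1 (Fin.castAdd s i), (mem_ker_snfMat_mulVecLin hrm d x.1).mp x.2 i⟩,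
    fun j => x.1 (Fin.natAdd r j))
  invFun y := ⟨Fin.append (fun i => (y.1 i : R)) y.2,
    (mem_ker_snfMat_mulVecLin hrm d _).mpr fun i => by simp [(y.1 i).2]⟩
  map_add' _ _ := rfl
  map_smul' _ _ := rfl
  left_inv x := Subtype.ext Fin.append_castAdd_natAdd
  right_inv y := by ext <;> simp

end snfMat

theorem ZMod.natCast_mul_eq_zero_iff_dvd {n a b : ℕ} (hab : a * b = n) (ha : a ≠ 0)
    (y : ZMod n) : (a : ZMod n) * y = 0 ↔ (b : ZMod n) ∣ y := by
  constructor
  · intro h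
    obtain ⟨t, rfl⟩ := ZMod.intCast_surjective y
    have hdvd : ((a * b : ℕ) : ℤ) ∣ a * t := by
      rw [hab, ← ZMod.intCast_zmod_eq_zero_iff_dvd]
      push_cast
      exact h
    push_cast at hdvd
    obtain ⟨u, rfl⟩ := (mul_dvd_mul_iff_left (by exact_mod_cast ha)).mp hdvd
    exact ⟨u, by push_cast; rfl⟩
  · rintro ⟨z, rfl⟩
    rw [← mul_assoc, ← Nat.cast_mul, hab, ZMod.natCast_self, zero_mul]

noncomputable def ZMod.quotSpanPowEquivTorsionBy {p k c : ℕ} (hp : p ≠ 0) (hc : c ≤ k) :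
    (ZMod (p ^ k) ⧸ Ideal.span {(p : ZMod (p ^ k)) ^ c}) ≃ₗ[ZMod (p ^ k)]
      Submodule.torsionBy (ZMod (p ^ k)) (ZMod (p ^ k)) ((p : ZMod (p ^ k)) ^ c) :=
  have hpow {a b : ℕ} (hab : a + b = k) (y : ZMod (p ^ k)) :
      (p : ZMod (p ^ k)) ^ a * y = 0 ↔ (p : ZMod (p ^ k)) ^ b ∣ y := by
    rw [← Nat.cast_pow, ← Nat.cast_pow]
    exact ZMod.natCast_mul_eq_zero_iff_dvd (by rw [← pow_add, hab]) (pow_ne_zero a hp) y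
  have htorsionOf : Ideal.torsionOf (ZMod (p ^ k)) (ZMod (p ^ k)) ((p : ZMod (p ^ k)) ^ (k - c)) =
      Ideal.span {(p : ZMod (p ^ k)) ^ c} := by
    ext y
    rw [Ideal.mem_torsionOf_iff, Ideal.mem_span_singleton, smul_eq_mul, mul_comm,
      hpow (Nat.sub_add_cancel hc)]
  have hspan : (ZMod (p ^ k) ∙ (p : ZMod (p ^ k)) ^ (k - c)) =
      Submodule.torsionBy (ZMod (p ^ k)) (ZMod (p ^ k)) ((p : ZMod (p ^ k)) ^ c) := by
    ext y
    rw [← Ideal.span, Ideal.mem_span_singleton, Submodule.mem_torsionBy_iff, smul_eq_mul,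
      hpow (Nat.add_sub_cancel' hc)]
  Submodule.quotEquivOfEq _ _ htorsionOf.symm ≪≫ₗ
    Ideal.quotTorsionOfEquivSpanSingleton _ _ _ ≪≫ₗ LinearEquiv.ofEq _ _ hspan

theorem kernel_iso_of_snf_general
    {p k m n r : ℕ} (hp : p.Prime)
    (M : Matrix (Fin m) (Fin n) (ZMod (p ^ k)))
    (c : Fin r → ℕ) (hr : r ≤ min m n)
    (hck : ∀ i, c i < k)
    (hsnf : HasSNF M (fun i => (p : ZMod (p ^ k)) ^ (c i))) :
    Nonempty
      (LinearMap.ker M.mulVecLin ≃ₗ[ZMod (p ^ k)]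
        (((i : Fin r) →
            ZMod (p ^ k) ⧸ Ideal.span {(p : ZMod (p ^ k)) ^ (c i)}) ×
          (Fin (n - r) → ZMod (p ^ k)))) := by
  obtain ⟨U, V, hU, hV, hUV⟩ := hsnf
  obtain ⟨s, rfl⟩ := Nat.exists_eq_add_of_le (hr.trans (min_le_right m n))
  rw [Nat.add_sub_cancel_left]
  exact ⟨(M.kerMulVecLinEquivOfIsUnitDet hU hV).symm ≪≫ₗ LinearEquiv.ofEq _ _ (by rw [hUV]) ≪≫ₗ
    kerSnfMatEquiv (hr.trans (min_le_left m _)) _ ≪≫ₗ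
    (LinearEquiv.piCongrRight fun i =>
      (ZMod.quotSpanPowEquivTorsionBy hp.ne_zero (hck i).le).symm).prodCongr (.refl _ _)⟩

/-- If the invariant factors of an `m × n` matrix `M` over `ℤ/p^kℤ` are
`p^{c_1}, …, p^{c_r}` with `0 ≤ c_1 ≤ ⋯ ≤ c_r < k`, then
`ker M ≅ (⊕_{i} ℤ/p^{c_i}ℤ) ⊕ (ℤ/p^kℤ)^{n-r}`, where `ℤ/p^{c_i}ℤ` is realized
as the quotient of `ℤ/p^kℤ` by the ideal generated by `p^{c_i}`. -/
theorem kernel_iso_of_snf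
    {p k m n r : ℕ} (hp : p.Prime) (hk : 1 ≤ k)
    (M : Matrix (Fin m) (Fin n) (ZMod (p ^ k)))
    (c : Fin r → ℕ) (hr : r ≤ min m n)
    (hmono : ∀ i j : Fin r, i ≤ j → c i ≤ c j) (hck : ∀ i, c i < k)
    (hsnf : HasSNF M (fun i => (p : ZMod (p ^ k)) ^ (c i))) :
    Nonempty
      (LinearMap.ker M.mulVecLin ≃ₗ[ZMod (p ^ k)]
        (((i : Fin r) →
            ZMod (p ^ k) ⧸ Ideal.span {(p : ZMod (p ^ k)) ^ (c i)}) ×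
          (Fin (n - r) → ZMod (p ^ k)))) :=
  kernel_iso_of_snf_general hp M c hr hck hsnf
end

section
/- Let M be an m × n integral matrix with m ≥ n whose Smith normal form over ℤ is diag(d_1, …, d_n) (padded with zero rows). Then the congruence M z ≡ 0 (mod p^k) has an integral solution z with z ≢ 0 (mod p) if and only if p^k divides d_n. -/
open Matrix

lemma snf_mulVec {m n : ℕ} (d : Fin n → ℤ) (w : Fin n → ℤ) (i : Fin m) :
    (snfMat m n n d *ᵥ w) i = if h : (i : ℕ) < n then d ⟨i, h⟩ * w ⟨i, h⟩ else 0 := by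
  simp only [snfMat, mulVec, dotProduct, of_apply]
  split
  · next h =>
    rw [Finset.sum_eq_single (⟨i, h⟩ : Fin n)]
    · rw [dif_pos ⟨rfl, h⟩]
    · intro j _ hj
      rw [dif_neg, zero_mul]
      rintro ⟨h1, -⟩
      exact hj (Fin.ext h1.symm)
    · intro hmem; exact absurd (Finset.mem_univ _) hmem
  · next h =>
    apply Finset.sum_eq_zero
    intro j _
    rw [dif_neg, zero_mul]
    rintro ⟨h1, h2⟩; exact h h2

lemma dvd_mulVec_entry {m m' : ℕ} (c : ℤ) (A : Matrix (Fin m') (Fin m) ℤ)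
    (v : Fin m → ℤ) (hv : ∀ i, c ∣ v i) : ∀ i, c ∣ (A *ᵥ v) i := by
  intro i
  simp only [mulVec, dotProduct]
  exact Finset.dvd_sum fun j _ => (hv j).mul_left _

/-- Let `M` be an `m × n` integral matrix (`m ≥ n`) whose Smith normal form
over `ℤ` is `diag(d_1, …, d_n)` padded with zero rows.  Then `M z ≡ 0 (mod p^k)`
has a solution `z ≢ 0 (mod p)` iff `p^k ∣ d_n`. -/
theorem exists_primitive_solution_iff_dvd_last_invariant_factor
    {m n : ℕ} (hmn : n ≤ m) (hn : 0 < n) (p k : ℕ) (hp : p.Prime) (hk : 1 ≤ k)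
    (M : Matrix (Fin m) (Fin n) ℤ) (d : Fin n → ℤ)
    (hchain : ∀ i j : Fin n, i ≤ j → d i ∣ d j)
    (hsnf : ∃ (U : Matrix (Fin m) (Fin m) ℤ) (V : Matrix (Fin n) (Fin n) ℤ),
      IsUnit U.det ∧ IsUnit V.det ∧ U * M * V = snfMat m n n d) :
    (∃ z : Fin n → ℤ, (¬ (∀ i, (p : ℤ) ∣ z i)) ∧ ∀ i, (p : ℤ) ^ k ∣ (M *ᵥ z) i) ↔
      (p : ℤ) ^ k ∣ d ⟨n - 1, by omega⟩ := by
  obtain ⟨U, V, hU, hV, hUV⟩ := hsnf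
  have hpz : Prime ((p : ℤ)) := Nat.prime_iff_prime_int.mp hp
  set last : Fin n := ⟨n - 1, by omega⟩ with hlast
  have hle : ∀ j : Fin n, j ≤ last := fun j => by
    have := j.isLt; simp only [Fin.le_def, hlast]; omega
  constructor
  · rintro ⟨z, hz, hdvd⟩
    by_contra hnd
    set w : Fin n → ℤ := V⁻¹ *ᵥ z with hw
    have hDw : snfMat m n n d *ᵥ w = U *ᵥ (M *ᵥ z) := by
      rw [hw, mulVec_mulVec, mulVec_mulVec, ← hUV, Matrix.mul_assoc (U * M),
        Matrix.mul_nonsing_inv V hV, Matrix.mul_one]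
    have hdw : ∀ j : Fin n, (p : ℤ) ^ k ∣ d j * w j := by
      intro j
      have h1 : ((Fin.castLE hmn j : Fin m) : ℕ) < n := j.isLt
      have := snf_mulVec d w (Fin.castLE hmn j)
      rw [dif_pos h1] at this
      have hj : (⟨(Fin.castLE hmn j : Fin m), h1⟩ : Fin n) = j := Fin.ext rfl
      rw [hj] at this
      rw [← this, hDw]
      exact dvd_mulVec_entry _ U _ hdvd _
    have hpw : ∀ j, (p : ℤ) ∣ w j := by
      intro j
      by_contra hpwj
      have hcop : IsCoprime ((p : ℤ)) (w j) := (hpz.coprime_iff_not_dvd).2 hpwj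
      have : (p : ℤ) ^ k ∣ d j := (hcop.pow_left).dvd_of_dvd_mul_right (hdw j)
      exact hnd (this.trans (hchain j last (hle j)))
    apply hz
    intro i
    have hzV : z = V *ᵥ w := by
      rw [hw, mulVec_mulVec, Matrix.mul_nonsing_inv V hV, one_mulVec]
    rw [hzV]
    exact dvd_mulVec_entry _ V w hpw i
  · intro hd
    set w : Fin n → ℤ := Pi.single last 1 with hw
    refine ⟨V *ᵥ w, ?_, ?_⟩
    · intro hall
      have : (p : ℤ) ∣ (V⁻¹ *ᵥ (V *ᵥ w)) last :=
        dvd_mulVec_entry _ V⁻¹ _ hall last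
      rw [mulVec_mulVec, Matrix.nonsing_inv_mul V hV, one_mulVec, hw,
        Pi.single_eq_same] at this
      exact hpz.not_dvd_one this
    · intro i
      have hMV : M * V = U⁻¹ * snfMat m n n d := by
        rw [← hUV, ← Matrix.mul_assoc, ← Matrix.mul_assoc,
          Matrix.nonsing_inv_mul U hU, Matrix.one_mul]
      have : M *ᵥ (V *ᵥ w) = U⁻¹ *ᵥ (snfMat m n n d *ᵥ w) := by
        rw [mulVec_mulVec, mulVec_mulVec, hMV]
      rw [this]
      apply dvd_mulVec_entry
      intro i'
      rw [snf_mulVec]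
      split
      · next h =>
        by_cases he : (⟨(i' : ℕ), h⟩ : Fin n) = last
        · rw [he, hw, Pi.single_eq_same, mul_one]; exact hd
        · rw [hw, Pi.single_eq_of_ne he, mul_zero]
          exact dvd_zero _
      · exact dvd_zero _
end

section
/- Let M be a free submodule of rank m of (ℤ/p^kℤ)^n and let v_1, …, v_m ∈ M be linearly independent over ℤ/p^kℤ. Then {v_1, …, v_m} is a basis of M. -/
open Submodule

/- Over a finite ring, `linearCombination R v : (ι →₀ R) → M` is an injection between finite
sets of the same cardinality, hence a bijection. -/
theorem LinearIndependent.span_eq_top_of_finite_of_linearEquiv {R M ι : Type*} [Ring R]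
    [Finite R] [AddCommGroup M] [Module R M] [Finite ι] {v : ι → M}
    (hv : LinearIndependent R v) (e : M ≃ₗ[R] (ι → R)) :
    span R (Set.range v) = ⊤ := by
  let coeffEquiv : (ι →₀ R) ≃ M := Finsupp.equivFunOnFinite.trans e.symm.toEquiv
  have : Finite (ι →₀ R) := .of_equiv _ Finsupp.equivFunOnFinite.symm
  have hsurj : Function.Surjective (Finsupp.linearCombination R v) :=
    (Finite.injective_iff_surjective_of_equiv coeffEquiv).mp hv
  rw [← Finsupp.range_linearCombination]
  exact LinearMap.range_eq_top.mpr hsurj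

theorem linearIndependent_is_basis_of_free_rank_general
    {p k m n : ℕ} (hp : p.Prime)
    (M : Submodule (ZMod (p ^ k)) (Fin n → ZMod (p ^ k)))
    (hfree : Nonempty (M ≃ₗ[ZMod (p ^ k)] (Fin m → ZMod (p ^ k))))
    (v : Fin m → Fin n → ZMod (p ^ k)) (hv : ∀ i, v i ∈ M)
    (hli : LinearIndependent (ZMod (p ^ k)) v) :
    ∃ b : Module.Basis (Fin m) (ZMod (p ^ k)) M,
      ∀ i, (b i : Fin n → ZMod (p ^ k)) = v i := by
  -- `ZMod (p ^ k)` is finite only because `p ^ k ≠ 0`; over `ZMod 0 = ℤ` the claim fails.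
  have : NeZero (p ^ k) := ⟨pow_ne_zero _ hp.ne_zero⟩
  obtain ⟨e⟩ := hfree
  let w : Fin m → M := fun i => ⟨v i, hv i⟩
  have hw : LinearIndependent (ZMod (p ^ k)) w := LinearIndependent.of_comp M.subtype hli
  have hspan := hw.span_eq_top_of_finite_of_linearEquiv e
  exact ⟨Module.Basis.mk hw hspan.ge, fun i => by rw [Module.Basis.mk_apply]⟩

/-- If `M` is a free submodule of rank `m` of `(ℤ/p^kℤ)^n` and
`v_1, …, v_m ∈ M` are linearly independent over `ℤ/p^kℤ`, then
`{v_1, …, v_m}` is a basis of `M`. -/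
theorem linearIndependent_is_basis_of_free_rank
    {p k m n : ℕ} (hp : p.Prime) (hk : 1 ≤ k)
    (M : Submodule (ZMod (p ^ k)) (Fin n → ZMod (p ^ k)))
    (hfree : Nonempty (M ≃ₗ[ZMod (p ^ k)] (Fin m → ZMod (p ^ k))))
    (v : Fin m → Fin n → ZMod (p ^ k)) (hv : ∀ i, v i ∈ M)
    (hli : LinearIndependent (ZMod (p ^ k)) v) :
    ∃ b : Module.Basis (Fin m) (ZMod (p ^ k)) M,
      ∀ i, (b i : Fin n → ZMod (p ^ k)) = v i :=
  linearIndependent_is_basis_of_free_rank_general hp M hfree v hv hli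
end

section
/- Let M be a free submodule of rank m of (ℤ/p^kℤ)^n and let v_1, …, v_r ∈ M (r < m) be linearly independent. Then there exist v_{r+1}, …, v_m ∈ M such that {v_1, …, v_m} is a basis of M (basis extension / Steinitz property). -/
/-!
`ℤ/p^kℤ` is local (a quotient of `ℤ_[p]`) and its maximal ideal `(p)` is killed by
`s = p^(k-1) ≠ 0`. Over a local ring `(R, 𝔪, κ)` with such an `s`, an independent family `v` of `M`
stays independent in `κ ⊗ M`: if `∑ cᵢ vᵢ ∈ 𝔪M` then `∑ s cᵢ vᵢ = 0`, so every `s cᵢ = 0` and no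
`cᵢ` is a unit. Extend the images to a `κ`-basis of `κ ⊗ M` and lift the new vectors to `M`; for
`M` free, a family whose reduction is a `κ`-basis is an `R`-basis (Nakayama).
-/

open IsLocalRing TensorProduct Module

theorem LinearIndependent.exists_extension_fin {K V : Type*} [DivisionRing K] [AddCommGroup V]
    [Module K V] {r m : ℕ} {v : Fin r → V} (hv : LinearIndependent K v) (hrm : r ≤ m)
    (hm : m ≤ finrank K V) :
    ∃ u : Fin m → V, LinearIndependent K u ∧ ∀ i, u (Fin.castLE hrm i) = v i := by
  induction m, hrm using Nat.le_induction with
  | base => exact ⟨v, hv, fun i => rfl⟩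
  | succ m hrm ih =>
    obtain ⟨u, hu, huv⟩ := ih (by omega)
    obtain ⟨x, hx⟩ := exists_linearIndependent_snoc_of_lt_finrank hu (by omega)
    refine ⟨Fin.snoc u x, hx, fun i => ?_⟩
    rw [← huv, ← Fin.castSucc_castLE, Fin.snoc_castSucc]

namespace IsLocalRing

variable {R M : Type*} [CommRing R] [IsLocalRing R] [AddCommGroup M] [Module R M]

theorem linearIndependent_tmul_of_linearIndependent {s : R} (hs₀ : s ≠ 0)
    (hs : ∀ a ∈ maximalIdeal R, s * a = 0) {ι : Type*} {v : ι → M}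
    (hv : LinearIndependent R v) :
    LinearIndependent (ResidueField R) (TensorProduct.mk R (ResidueField R) M 1 ∘ v) := by
  rw [linearIndependent_iff']
  intro t g hg i hi
  choose c hc using fun j => residue_surjective (g j)
  have hsum : ∑ j ∈ t, g j • (1 ⊗ₜ[R] v j : ResidueField R ⊗[R] M) =
      1 ⊗ₜ ∑ j ∈ t, c j • v j := by
    simp only [tmul_sum, tmul_smul, ← hc, ← algebraMap_smul (ResidueField R) (c _)]
    rfl
  have hmem : ∑ j ∈ t, c j • v j ∈ maximalIdeal R • (⊤ : Submodule R M) := by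
    rw [← LinearMap.ker_tensorProductMk]
    exact hsum.symm.trans hg
  have hkill : maximalIdeal R • (⊤ : Submodule R M) ≤ LinearMap.ker (LinearMap.lsmul R M s) :=
    Submodule.smul_le.mpr fun a ha x _ => by
      rw [LinearMap.mem_ker, LinearMap.lsmul_apply, smul_smul, hs a ha, zero_smul]
  have hsc : s * c i = 0 := by
    refine linearIndependent_iff'.mp hv t (fun j => s * c j) ?_ i hi
    simp only [mul_smul, ← Finset.smul_sum]
    exact hkill hmem
  by_contra hgi
  have hunit : IsUnit (c i) := by
    rwa [← notMem_maximalIdeal, ← residue_eq_zero_iff, hc]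
  exact hs₀ (hunit.mul_left_eq_zero.mp hsc)

theorem exists_basis_extension_of_linearIndependent [Module.Free R M] [Module.Finite R M]
    {s : R} (hs₀ : s ≠ 0) (hs : ∀ a ∈ maximalIdeal R, s * a = 0) {r m : ℕ}
    (hm : finrank R M = m) (hrm : r ≤ m) {w : Fin r → M} (hw : LinearIndependent R w) :
    ∃ b : Basis (Fin m) R M, ∀ i, b (Fin.castLE hrm i) = w i := by
  let π := TensorProduct.mk R (ResidueField R) M 1
  have hπw := linearIndependent_tmul_of_linearIndependent hs₀ hs hw
  obtain ⟨u, hu, huw⟩ := hπw.exists_extension_fin hrm (by rw [finrank_baseChange, hm])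
  let bκ := basisOfLinearIndependentOfCardEqFinrank' u hu (by rw [finrank_baseChange, hm]; simp)
  obtain ⟨w', hw'u, hw'w⟩ :
      ∃ w' : Fin m → M, π ∘ w' = u ∧ ∀ i, w' (Fin.castLE hrm i) = w i := by
    choose t ht using fun j => TensorProduct.mk_surjective R M (ResidueField R)
      Ideal.Quotient.mk_surjective (u j)
    refine ⟨fun j => if hj : (j : ℕ) < r then w ⟨j, hj⟩ else t j, funext fun j => ?_,
      fun i => dif_pos i.isLt⟩
    by_cases hj : (j : ℕ) < r
    · simp only [Function.comp_apply, dif_pos hj]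
      exact (huw ⟨j, hj⟩).symm
    · simp only [Function.comp_apply, dif_neg hj]
      exact ht j
  refine ⟨Basis.mk (Module.IsLocalRing.linearIndependent_of_flat w' (hw'u ▸ hu))
    (span_eq_top_of_tmul_eq_basis w' bκ fun j => by
      rw [coe_basisOfLinearIndependentOfCardEqFinrank', ← hw'u]; rfl).ge, fun i => ?_⟩
  rw [Basis.coe_mk, hw'w]

end IsLocalRing

namespace ZMod

theorem isLocalRing_prime_pow {p k : ℕ} [Fact p.Prime] (hk : 0 < k) :
    IsLocalRing (ZMod (p ^ k)) :=
  haveI : Fact (1 < p ^ k) := ⟨Nat.one_lt_pow hk.ne' (Fact.out : p.Prime).one_lt⟩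
  haveI : NeZero (p ^ k) := ⟨pow_ne_zero _ (Fact.out : p.Prime).ne_zero⟩
  .of_surjective' (PadicInt.toZModPow k) fun a => ⟨a.val, by simp⟩

theorem natCast_pow_pred_ne_zero {p k : ℕ} (hp : p.Prime) (hk : 0 < k) :
    (p : ZMod (p ^ k)) ^ (k - 1) ≠ 0 := by
  rw [← Nat.cast_pow, Ne, natCast_eq_zero_iff, Nat.pow_dvd_pow_iff_le_right hp.one_lt]
  omega

theorem natCast_pow_pred_mul_eq_zero_of_not_isUnit {p k : ℕ} (hp : p.Prime) (hk : 0 < k)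
    {a : ZMod (p ^ k)} (ha : ¬IsUnit a) : (p : ZMod (p ^ k)) ^ (k - 1) * a = 0 := by
  have : NeZero (p ^ k) := ⟨pow_ne_zero _ hp.ne_zero⟩
  rw [← natCast_zmod_val a, isUnit_natCast_iff_not_dvd_pow hp hk, not_not] at ha
  obtain ⟨t, ht⟩ := ha
  rw [← natCast_zmod_val a, ht, ← Nat.cast_pow, ← Nat.cast_mul, ← mul_assoc, ← pow_succ,
    Nat.sub_add_cancel hk, Nat.cast_mul, natCast_self, zero_mul]

end ZMod

/-- Basis extension (Steinitz property) over `ℤ/p^kℤ`: if `M` is a free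
submodule of rank `m` of `(ℤ/p^kℤ)^n` and `v_1, …, v_r ∈ M` (`r < m`) are
linearly independent, then they extend to a basis of `M`. -/
theorem linearIndependent_extends_to_basis
    {p k m n r : ℕ} (hp : p.Prime) (hk : 1 ≤ k) (hrm : r < m)
    (M : Submodule (ZMod (p ^ k)) (Fin n → ZMod (p ^ k)))
    (hfree : Nonempty (M ≃ₗ[ZMod (p ^ k)] (Fin m → ZMod (p ^ k))))
    (v : Fin r → Fin n → ZMod (p ^ k)) (hv : ∀ i, v i ∈ M)
    (hli : LinearIndependent (ZMod (p ^ k)) v) :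
    ∃ b : Module.Basis (Fin m) (ZMod (p ^ k)) M,
      ∀ i : Fin r, (b (Fin.castLE hrm.le i) : Fin n → ZMod (p ^ k)) = v i := by
  have : Fact p.Prime := ⟨hp⟩
  have : IsLocalRing (ZMod (p ^ k)) := ZMod.isLocalRing_prime_pow hk
  obtain ⟨e⟩ := hfree
  have : Module.Free (ZMod (p ^ k)) M := .of_equiv e.symm
  have : Module.Finite (ZMod (p ^ k)) M := .equiv e.symm
  have hM : finrank (ZMod (p ^ k)) M = m := by rw [e.finrank_eq, finrank_fin_fun]
  obtain ⟨b, hb⟩ := exists_basis_extension_of_linearIndependent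
    (ZMod.natCast_pow_pred_ne_zero hp hk)
    (fun _ ha => ZMod.natCast_pow_pred_mul_eq_zero_of_not_isUnit hp hk ha) hM hrm.le
    (w := fun i => ⟨v i, hv i⟩) (.of_comp M.subtype hli)
  exact ⟨b, fun i => congrArg Subtype.val (hb i)⟩
end

section
/- Two graphs G and H on n vertices are generalized cospectral (G is cospectral with H and the complement of G is cospectral with the complement of H) if and only if there exists a regular orthogonal matrix Q (real orthogonal with all row sums equal to 1) such that Qᵀ A(G) Q = A(H). -/
/-!
Conjugation by an orthogonal `Q` with `Q e = e` fixes the all-ones matrix `J = e eᵀ`, so it carries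
the complement `J - I - A(G)` to `J - I - A(H)`. Conversely, cospectral symmetric matrices are
diagonalised to the same `D = diag μ` as `Uᵀ A U = D = Vᵀ B V`. With `a = Uᵀ e` the complement
becomes `a aᵀ - I - D`, whose characteristic polynomial at `x` is
`∏ (x + 1 + μᵢ) * (1 - ∑ aᵢ² / (x + 1 + μᵢ))`. Equal complement spectra therefore give equal
rational functions, and comparing residues shows that `a` and `b = Vᵀ e` have the same squared
norm on every eigenspace of `D`. A Householder reflection inside each eigenspace gives an orthogonal
`R` commuting with `D` with `R b = a`, and `Q = U R Vᵀ`.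
-/

open Matrix Polynomial Filter Topology

open Classical in
/-- The adjacency matrix of a simple graph with entries in `R`. -/
noncomputable def adjMat {n : ℕ} (R : Type*) [Zero R] [One R]
    (G : SimpleGraph (Fin n)) : Matrix (Fin n) (Fin n) R :=
  Matrix.of fun i j => if G.Adj i j then 1 else 0

section
variable {ι R : Type*} [Fintype ι] [CommRing R]

theorem Matrix.charpoly_transpose_mul_mul [DecidableEq ι] {U : Matrix ι ι R} (hU : Uᵀ * U = 1)
    (M : Matrix ι ι R) : (Uᵀ * M * U).charpoly = M.charpoly := by
  rw [charpoly_mul_comm, ← Matrix.mul_assoc, mul_eq_one_comm.mp hU, Matrix.one_mul]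

omit [Fintype ι] in
theorem Matrix.vecMulVec_one_one {κ : Type*} : vecMulVec (1 : ι → R) (1 : κ → R) = of 1 :=
  vecMulVec_one 1

theorem Matrix.transpose_mul_of_one_mul (W : Matrix ι ι R) :
    Wᵀ * of 1 * W = vecMulVec (Wᵀ *ᵥ 1) (Wᵀ *ᵥ 1) := by
  rw [← vecMulVec_one_one, mul_vecMulVec, vecMulVec_mul, mulVec_transpose]

theorem Matrix.transpose_mul_of_one_sub_one_sub_mul [DecidableEq ι] {W : Matrix ι ι R}
    (hW : Wᵀ * W = 1) (M : Matrix ι ι R) :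
    Wᵀ * (of 1 - 1 - M) * W = vecMulVec (Wᵀ *ᵥ 1) (Wᵀ *ᵥ 1) - 1 - Wᵀ * M * W := by
  rw [Matrix.mul_sub, Matrix.mul_sub, Matrix.sub_mul, Matrix.sub_mul, Matrix.mul_one, hW,
    transpose_mul_of_one_mul]

end

theorem Matrix.det_diagonal_sub_vecMulVec {ι K : Type*} [Fintype ι] [DecidableEq ι] [Field K]
    {d : ι → K} (hd : ∀ i, d i ≠ 0) (u v : ι → K) :
    (diagonal d - vecMulVec u v).det = (∏ i, d i) * (1 - ∑ i, u i * v i / d i) := by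
  have hfactor : diagonal d - vecMulVec u v
      = diagonal d * (1 + replicateCol Unit (-(u / d)) * replicateRow Unit v) := by
    have hdu : diagonal d *ᵥ -(u / d) = -u := by
      ext i; simp [mulVec_diagonal, mul_div_cancel₀ _ (hd i)]
    rw [Matrix.mul_add, Matrix.mul_one, ← vecMulVec_eq, mul_vecMulVec, hdu, neg_vecMulVec,
      sub_eq_add_neg]
  rw [hfactor, det_mul, det_diagonal, det_one_add_replicateCol_mul_replicateRow]
  simp only [dotProduct, Pi.neg_apply, Pi.div_apply, mul_neg, Finset.sum_neg_distrib,
    ← sub_eq_add_neg]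
  congr 2
  exact Finset.sum_congr rfl fun i _ => by ring

theorem sum_filter_eq_zero_of_sum_div_sub_eq_zero {𝕜 ι : Type*} [NontriviallyNormedField 𝕜]
    [Fintype ι] [DecidableEq 𝕜] {c r : ι → 𝕜}
    (h : ∀ᶠ x in cofinite, ∑ i, c i / (x - r i) = 0) (t : 𝕜) : ∑ i with r i = t, c i = 0 := by
  -- the left-hand side is the residue at `t` of `∑ i, c i / (x - r i)`
  have hlim : Tendsto (fun x => (x - t) * ∑ i, c i / (x - r i)) (𝓝[≠] t)
      (𝓝 (∑ i with r i = t, c i)) := by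
    simp_rw [Finset.mul_sum, Finset.sum_filter]
    refine tendsto_finsetSum _ fun i _ => ?_
    split_ifs with hi
    · subst hi
      refine tendsto_const_nhds.congr' ?_
      filter_upwards [self_mem_nhdsWithin] with x hx
      field_simp [sub_ne_zero.mpr hx]
    · have hcont : ContinuousAt (fun x => (x - t) * (c i / (x - r i))) t := by
        have : t - r i ≠ 0 := sub_ne_zero.mpr (Ne.symm hi)
        fun_prop (disch := assumption)
      simpa using hcont.tendsto.mono_left nhdsWithin_le_nhds
  have hzero : (fun x => (x - t) * ∑ i, c i / (x - r i)) =ᶠ[𝓝[≠] t] fun _ => 0 :=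
    (h.filter_mono (nhdsNE_le_cofinite t)).mono fun x hx => by simp [hx]
  exact tendsto_nhds_unique hlim (tendsto_const_nhds.congr' hzero.symm)

theorem sum_filter_sq_eq_of_charpoly_eq {ι : Type*} [Fintype ι] [DecidableEq ι] {μ a b : ι → ℝ}
    (h : (vecMulVec a a - 1 - diagonal μ).charpoly = (vecMulVec b b - 1 - diagonal μ).charpoly)
    (t : ℝ) : ∑ i with μ i = t, a i ^ 2 = ∑ i with μ i = t, b i ^ 2 := by
  set r : ι → ℝ := fun i => -1 - μ i
  have hscalar (x : ℝ) (u : ι → ℝ) :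
      scalar ι x - (vecMulVec u u - 1 - diagonal μ)
        = diagonal (fun i => x - r i) - vecMulVec u u := by
    ext i j
    by_cases hij : i = j
    · subst hij
      simp only [scalar_apply, Matrix.sub_apply, diagonal_apply_eq, one_apply_eq, r]
      ring
    · simp [hij]
  have hsum : ∀ᶠ x in cofinite, ∑ i, (a i ^ 2 - b i ^ 2) / (x - r i) = 0 := by
    filter_upwards [(Set.finite_range r).eventually_cofinite_notMem] with x hx
    have hd (i : ι) : x - r i ≠ 0 := sub_ne_zero.mpr fun h => hx ⟨i, h.symm⟩
    have hdet := congrArg (eval x) h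
    rw [eval_charpoly, eval_charpoly, hscalar, hscalar, det_diagonal_sub_vecMulVec hd,
      det_diagonal_sub_vecMulVec hd] at hdet
    have hprod : ∏ i, (x - r i) ≠ 0 := Finset.prod_ne_zero_iff.mpr fun i _ => hd i
    simp only [sub_div, Finset.sum_sub_distrib, sq]
    linarith [mul_left_cancel₀ hprod hdet]
  have := sum_filter_eq_zero_of_sum_div_sub_eq_zero hsum (-1 - t)
  simpa only [r, sub_right_inj, Finset.sum_sub_distrib, sub_eq_zero] using this

section
variable {ι 𝕜 : Type*} [Fintype ι] [DecidableEq 𝕜] [Field 𝕜]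

/-- The orthogonal projection onto the span of the restrictions of `c` to the level sets of `μ`;
on a level set where `∑ c k ^ 2` vanishes the division by zero makes it `0`. -/
noncomputable def fiberwiseProj (μ c : ι → 𝕜) : Matrix ι ι 𝕜 :=
  of fun i j => if μ i = μ j then c i * c j / ∑ k with μ k = μ i, c k ^ 2 else 0

variable (μ c : ι → 𝕜)

theorem fiberwiseProj_transpose : (fiberwiseProj μ c)ᵀ = fiberwiseProj μ c := by
  ext i j
  simp only [fiberwiseProj, transpose_apply, of_apply]
  split_ifs with hji hij hij
  · rw [hji, mul_comm]
  · exact absurd hji.symm hij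
  · exact absurd hij.symm hji
  · rfl

theorem fiberwiseProj_mulVec (v : ι → 𝕜) (i : ι) :
    (fiberwiseProj μ c *ᵥ v) i
      = c i * (∑ j with μ j = μ i, c j * v j) / ∑ j with μ j = μ i, c j ^ 2 := by
  rw [Finset.mul_sum, Finset.sum_div, Finset.sum_filter]
  refine Finset.sum_congr rfl fun j _ => ?_
  simp only [fiberwiseProj, of_apply, eq_comm (a := μ j)]
  split_ifs
  · ring
  · rw [zero_mul]

theorem fiberwiseProj_mul_self : fiberwiseProj μ c * fiberwiseProj μ c = fiberwiseProj μ c := by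
  ext i k
  rw [mul_apply', ← mulVec, fiberwiseProj_mulVec]
  set s := ∑ j with μ j = μ i, c j ^ 2
  by_cases hik : μ i = μ k
  · have hinner : ∑ j with μ j = μ i, c j * fiberwiseProj μ c j k = s * c k / s := by
      rw [Finset.sum_mul, Finset.sum_div]
      refine Finset.sum_congr rfl fun j hj => ?_
      have hji : μ j = μ i := (Finset.mem_filter.mp hj).2
      rw [fiberwiseProj, of_apply, if_pos (hji.trans hik), hji]
      ring
    rw [hinner, fiberwiseProj, of_apply, if_pos hik]
    change c i * (s * c k / s) / s = c i * c k / s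
    rcases eq_or_ne s 0 with hs | hs
    · simp [hs]
    · field_simp
  · have hinner : ∑ j with μ j = μ i, c j * fiberwiseProj μ c j k = 0 := by
      refine Finset.sum_eq_zero fun j hj => ?_
      have hji : μ j = μ i := (Finset.mem_filter.mp hj).2
      rw [fiberwiseProj, of_apply, if_neg (hji ▸ hik), mul_zero]
    rw [hinner, fiberwiseProj, of_apply, if_neg hik, mul_zero, zero_div]

theorem commute_fiberwiseProj_diagonal [DecidableEq ι] :
    Commute (fiberwiseProj μ c) (diagonal μ) := by
  ext i j
  simp only [fiberwiseProj, mul_diagonal, diagonal_mul, of_apply]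
  split_ifs with h
  · rw [h, mul_comm]
  · simp

end

section
variable {ι 𝕜 : Type*} [Fintype ι] [DecidableEq 𝕜] [Field 𝕜] [LinearOrder 𝕜]
  [IsStrictOrderedRing 𝕜] {μ a b : ι → 𝕜}

theorem two_smul_fiberwiseProj_sub_mulVec
    (h : ∀ t, ∑ i with μ i = t, a i ^ 2 = ∑ i with μ i = t, b i ^ 2) :
    ((2 : 𝕜) • fiberwiseProj μ (a - b)) *ᵥ a = a - b := by
  ext i
  rw [smul_mulVec, Pi.smul_apply, fiberwiseProj_mulVec, smul_eq_mul]
  set s := ∑ j with μ j = μ i, (a - b) j ^ 2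
  have hinner : 2 * ∑ j with μ j = μ i, (a - b) j * a j = s := by
    calc 2 * ∑ j with μ j = μ i, (a - b) j * a j
        = ∑ j with μ j = μ i, ((a - b) j ^ 2 + (a j ^ 2 - b j ^ 2)) := by
          rw [Finset.mul_sum]
          exact Finset.sum_congr rfl fun j _ => by simp only [Pi.sub_apply]; ring
      _ = s + (∑ j with μ j = μ i, a j ^ 2 - ∑ j with μ j = μ i, b j ^ 2) := by
          rw [Finset.sum_add_distrib, Finset.sum_sub_distrib]
      _ = s := by rw [h, sub_self, add_zero]
  rcases eq_or_ne s 0 with hs | hs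
  · have hi : (a - b) i ^ 2 = 0 :=
      (Finset.sum_eq_zero_iff_of_nonneg fun j _ => sq_nonneg _).mp hs i (by simp)
    simp [hs, pow_eq_zero_iff two_ne_zero |>.mp hi]
  · rw [← hinner] at hs ⊢
    have hm := right_ne_zero_of_mul hs
    field_simp

variable [DecidableEq ι]

theorem exists_orthogonal_commute_diagonal_mulVec_eq
    (h : ∀ t, ∑ i with μ i = t, a i ^ 2 = ∑ i with μ i = t, b i ^ 2) :
    ∃ R : Matrix ι ι 𝕜, Rᵀ * R = 1 ∧ Commute R (diagonal μ) ∧ R *ᵥ a = b := by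
  set P := fiberwiseProj μ (a - b)
  refine ⟨1 - (2 : 𝕜) • P, ?_, ?_, ?_⟩
  · rw [transpose_sub, transpose_one, transpose_smul, fiberwiseProj_transpose]
    calc (1 - (2 : 𝕜) • P) * (1 - (2 : 𝕜) • P) = 1 - (4 : 𝕜) • P + (4 : 𝕜) • (P * P) := by
          simp only [sub_mul, mul_sub, Matrix.one_mul, Matrix.mul_one, smul_mul_smul]
          module
      _ = 1 := by rw [fiberwiseProj_mul_self]; module
  · exact (Commute.one_left _).sub_left ((commute_fiberwiseProj_diagonal μ _).smul_left _)
  · rw [sub_mulVec, one_mulVec, two_smul_fiberwiseProj_sub_mulVec h, sub_sub_cancel]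

end

section
variable {ι : Type*} [Fintype ι] [DecidableEq ι]

theorem Matrix.IsHermitian.exists_transpose_mul_mul_eq_diagonal {A : Matrix ι ι ℝ}
    (hA : A.IsHermitian) :
    ∃ U : Matrix ι ι ℝ, Uᵀ * U = 1 ∧ Uᵀ * A * U = diagonal hA.eigenvalues := by
  refine ⟨hA.eigenvectorUnitary, ?_, ?_⟩
  · simpa [star_eq_conjTranspose] using Unitary.coe_star_mul_self hA.eigenvectorUnitary
  · have := hA.conjStarAlgAut_star_eigenvectorUnitary
    rw [Unitary.conjStarAlgAut_star_apply] at this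
    simpa [star_eq_conjTranspose] using this

theorem exists_regular_orthogonal_conj_of_charpoly_eq {A B : Matrix ι ι ℝ}
    (hA : A.IsHermitian) (hB : B.IsHermitian) (h : A.charpoly = B.charpoly)
    (hc : (of 1 - 1 - A).charpoly = (of 1 - 1 - B).charpoly) :
    ∃ Q : Matrix ι ι ℝ, Qᵀ * Q = 1 ∧ Q *ᵥ 1 = 1 ∧ Qᵀ * A * Q = B := by
  obtain ⟨U, hU, hUA⟩ := hA.exists_transpose_mul_mul_eq_diagonal
  obtain ⟨V, hV, hVB⟩ := hB.exists_transpose_mul_mul_eq_diagonal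
  rw [← (hA.eigenvalues_eq_eigenvalues_iff hB).mpr h] at hVB
  set μ := hA.eigenvalues
  have hU' : U * Uᵀ = 1 := mul_eq_one_comm.mp hU
  have hV' : V * Vᵀ = 1 := mul_eq_one_comm.mp hV
  have hcompl {W M : Matrix ι ι ℝ} (hW : Wᵀ * W = 1) (hWM : Wᵀ * M * W = diagonal μ) :
      (vecMulVec (Wᵀ *ᵥ 1) (Wᵀ *ᵥ 1) - 1 - diagonal μ).charpoly = (of 1 - 1 - M).charpoly := by
    rw [← hWM, ← transpose_mul_of_one_sub_one_sub_mul hW, charpoly_transpose_mul_mul hW]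
  have hfiber := sum_filter_sq_eq_of_charpoly_eq (a := Vᵀ *ᵥ 1) (b := Uᵀ *ᵥ 1) <| by
    rw [hcompl hV hVB, hcompl hU hUA, hc]
  obtain ⟨R, hR, hRμ, hRe⟩ := exists_orthogonal_commute_diagonal_mulVec_eq hfiber
  refine ⟨U * R * Vᵀ, ?_, ?_, ?_⟩
  · calc (U * R * Vᵀ)ᵀ * (U * R * Vᵀ) = V * (Rᵀ * (Uᵀ * U) * R) * Vᵀ := by
          simp only [transpose_mul, transpose_transpose, Matrix.mul_assoc]
      _ = 1 := by rw [hU, Matrix.mul_one, hR, Matrix.mul_one, hV']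
  · rw [← mulVec_mulVec, ← mulVec_mulVec, hRe, mulVec_mulVec, hU', one_mulVec]
  · calc (U * R * Vᵀ)ᵀ * A * (U * R * Vᵀ) = V * (Rᵀ * (Uᵀ * A * U) * R) * Vᵀ := by
          simp only [transpose_mul, transpose_transpose, Matrix.mul_assoc]
      _ = V * (Rᵀ * R * diagonal μ) * Vᵀ := by
          rw [hUA, Matrix.mul_assoc Rᵀ, ← hRμ.eq, ← Matrix.mul_assoc Rᵀ]
      _ = (V * Vᵀ) * B * (V * Vᵀ) := by
          rw [hR, Matrix.one_mul, ← hVB]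
          simp only [Matrix.mul_assoc]
      _ = B := by rw [hV', Matrix.one_mul, Matrix.mul_one]

theorem charpoly_eq_of_regular_orthogonal_conj {R : Type*} [CommRing R] {A B Q : Matrix ι ι R}
    (hQ : Qᵀ * Q = 1) (hQe : Q *ᵥ 1 = 1) (hAB : Qᵀ * A * Q = B) :
    A.charpoly = B.charpoly ∧ (of 1 - 1 - A).charpoly = (of 1 - 1 - B).charpoly := by
  have hQte : Qᵀ *ᵥ 1 = 1 := by
    conv_lhs => rw [← hQe, mulVec_mulVec, hQ, one_mulVec]
  refine ⟨by rw [← hAB, charpoly_transpose_mul_mul hQ], ?_⟩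
  rw [← hAB, ← charpoly_transpose_mul_mul hQ (of 1 - 1 - A),
    transpose_mul_of_one_sub_one_sub_mul hQ, hQte, vecMulVec_one_one]

end

open Classical in
theorem adjMat_eq_adjMatrix {n : ℕ} (R : Type*) [Zero R] [One R] (G : SimpleGraph (Fin n)) :
    adjMat R G = G.adjMatrix R :=
  rfl

theorem isHermitian_adjMat {n : ℕ} {R : Type*} [NonAssocSemiring R] [StarRing R]
    (G : SimpleGraph (Fin n)) : (adjMat R G).IsHermitian := by
  classical
  rw [adjMat_eq_adjMatrix]
  exact G.isHermitian_adjMatrix R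

theorem adjMat_compl {n : ℕ} {R : Type*} [AddCommGroup R] [One R] (G : SimpleGraph (Fin n)) :
    adjMat R Gᶜ = of 1 - 1 - adjMat R G := by
  classical
  have hG : IsCompl G Gᶜ := isCompl_compl
  rw [adjMat_eq_adjMatrix, adjMat_eq_adjMatrix,
    ← SimpleGraph.adjMatrix_completeGraph_eq_of_one_sub_one,
    ← SimpleGraph.IsCompl.adjMatrix_add_adjMatrix_eq_adjMatrix_completeGraph R hG,
    add_sub_cancel_left]
  congr

/-- Two graphs `G` and `H` on `n` vertices are generalized cospectral iff there
exists a regular orthogonal matrix `Q` (orthogonal with all row sums `1`) such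
that `Qᵀ A(G) Q = A(H)`. -/
theorem generalized_cospectral_iff_regular_orthogonal
    {n : ℕ} (G H : SimpleGraph (Fin n)) :
    ((adjMat ℝ G).charpoly = (adjMat ℝ H).charpoly ∧
        (adjMat ℝ Gᶜ).charpoly = (adjMat ℝ Hᶜ).charpoly) ↔
      ∃ Q : Matrix (Fin n) (Fin n) ℝ,
        Qᵀ * Q = 1 ∧ Q *ᵥ (fun _ => 1) = (fun _ => 1) ∧
        Qᵀ * adjMat ℝ G * Q = adjMat ℝ H := by
  rw [adjMat_compl, adjMat_compl]
  exact ⟨fun ⟨h, hc⟩ => exists_regular_orthogonal_conj_of_charpoly_eq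
      (isHermitian_adjMat G) (isHermitian_adjMat H) h hc,
    fun ⟨_, hQ, hQe, hAB⟩ => charpoly_eq_of_regular_orthogonal_conj hQ hQe hAB⟩
end

section
/- Let G be a controllable graph (its walk matrix W(G) = [e, Ae, …, A^{n−1}e] is nonsingular) and H generalized cospectral with G via a regular orthogonal matrix Q with Qᵀ A(G) Q = A(H). Then Qᵀ = W(H) · W(G)^{−1}; in particular Q is unique and has rational entries. -/
open Matrix

/-- The walk matrix `[e, Ae, …, A^{n-1}e]` of a square matrix `A`. -/
noncomputable def walkMatrix {n : ℕ} {R : Type*} [CommRing R]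
    (A : Matrix (Fin n) (Fin n) R) : Matrix (Fin n) (Fin n) R :=
  Matrix.of fun i j => ((A ^ (j : ℕ)) *ᵥ (fun _ => 1)) i

lemma key_walk {n : ℕ} (A B Q : Matrix (Fin n) (Fin n) ℝ)
    (hQorth : Qᵀ * Q = 1) (hreg : Q *ᵥ (fun _ => 1) = (fun _ => 1))
    (hQAB : Qᵀ * A * Q = B) : Qᵀ * walkMatrix A = walkMatrix B := by
  have hQQT : Q * Qᵀ = 1 := mul_eq_one_comm.mp hQorth
  have hswap : Qᵀ * A = B * Qᵀ := by
    rw [← hQAB, Matrix.mul_assoc, Matrix.mul_assoc, hQQT, Matrix.mul_one]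
  have hcomm : ∀ k : ℕ, Qᵀ * A ^ k = B ^ k * Qᵀ := by
    intro k
    induction k with
    | zero => simp
    | succ k ih =>
        rw [pow_succ, pow_succ, ← Matrix.mul_assoc, ih, Matrix.mul_assoc, hswap,
          ← Matrix.mul_assoc]
  have he : Qᵀ *ᵥ (fun _ => 1) = (fun _ => (1 : ℝ)) := by
    conv_lhs => rw [← hreg]
    rw [Matrix.mulVec_mulVec, hQorth, Matrix.one_mulVec]
  ext i j
  show ∑ k, Qᵀ i k * walkMatrix A k j = _
  have : ∑ k, Qᵀ i k * walkMatrix A k j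
      = (Qᵀ *ᵥ ((A ^ (j : ℕ)) *ᵥ (fun _ => 1))) i := by
    simp [walkMatrix, Matrix.mulVec, dotProduct]
  rw [this, Matrix.mulVec_mulVec, hcomm, ← Matrix.mulVec_mulVec, he]
  rfl

lemma walkMatrix_map {n : ℕ} (A : Matrix (Fin n) (Fin n) ℚ) :
    walkMatrix (A.map (algebraMap ℚ ℝ)) = (walkMatrix A).map (algebraMap ℚ ℝ) := by
  ext i j
  have hp : A.map (algebraMap ℚ ℝ) ^ (j : ℕ) = (A ^ (j : ℕ)).map (algebraMap ℚ ℝ) := by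
    rw [← RingHom.mapMatrix_apply, ← RingHom.mapMatrix_apply, ← map_pow]
  simp [walkMatrix, hp, Matrix.mulVec, dotProduct, map_sum]

lemma adjMat_map {n : ℕ} (G : SimpleGraph (Fin n)) :
    adjMat ℝ G = (adjMat ℚ G).map (algebraMap ℚ ℝ) := by
  ext i j
  simp [adjMat, apply_ite (algebraMap ℚ ℝ)]

/-- If `G` is controllable and `H` is generalized cospectral with `G` via a
regular orthogonal matrix `Q` with `Qᵀ A(G) Q = A(H)`, then
`Qᵀ = W(H) W(G)⁻¹`; in particular `Q` is unique and has rational entries. -/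
theorem regular_orthogonal_eq_walkMatrix_formula
    {n : ℕ} (G H : SimpleGraph (Fin n))
    (hcontrol : (walkMatrix (adjMat ℝ G)).det ≠ 0)
    (Q : Matrix (Fin n) (Fin n) ℝ)
    (hQorth : Qᵀ * Q = 1) (hQreg : Q *ᵥ (fun _ => 1) = (fun _ => 1))
    (hQAH : Qᵀ * adjMat ℝ G * Q = adjMat ℝ H) :
    Qᵀ = walkMatrix (adjMat ℝ H) * (walkMatrix (adjMat ℝ G))⁻¹ ∧
    (∀ i j, ∃ q : ℚ, Q i j = (q : ℝ)) ∧
    (∀ Q' : Matrix (Fin n) (Fin n) ℝ,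
      Q'ᵀ * Q' = 1 → Q' *ᵥ (fun _ => 1) = (fun _ => 1) →
      Q'ᵀ * adjMat ℝ G * Q' = adjMat ℝ H → Q' = Q) := by
  have hWG : IsUnit (walkMatrix (adjMat ℝ G)).det := isUnit_iff_ne_zero.mpr hcontrol
  have formula : ∀ Q' : Matrix (Fin n) (Fin n) ℝ,
      Q'ᵀ * Q' = 1 → Q' *ᵥ (fun _ => 1) = (fun _ => 1) →
      Q'ᵀ * adjMat ℝ G * Q' = adjMat ℝ H →
      Q'ᵀ = walkMatrix (adjMat ℝ H) * (walkMatrix (adjMat ℝ G))⁻¹ := by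
    intro Q' h1 h2 h3
    have := key_walk (adjMat ℝ G) (adjMat ℝ H) Q' h1 h2 h3
    rw [← this, Matrix.mul_assoc, Matrix.mul_nonsing_inv _ hWG, Matrix.mul_one]
  have hQ := formula Q hQorth hQreg hQAH
  refine ⟨hQ, ?_, ?_⟩
  · -- rationality
    have hmapG := adjMat_map G
    have hmapH := adjMat_map H
    set f := algebraMap ℚ ℝ
    have hWGmap : walkMatrix (adjMat ℝ G) = (walkMatrix (adjMat ℚ G)).map f := by
      rw [hmapG, walkMatrix_map]
    have hWHmap : walkMatrix (adjMat ℝ H) = (walkMatrix (adjMat ℚ H)).map f := by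
      rw [hmapH, walkMatrix_map]
    have hdetQ : (walkMatrix (adjMat ℚ G)).det ≠ 0 := by
      intro h
      apply hcontrol
      rw [hWGmap, ← RingHom.mapMatrix_apply, ← RingHom.map_det, h, map_zero]
    have hWQunit : IsUnit (walkMatrix (adjMat ℚ G)).det := isUnit_iff_ne_zero.mpr hdetQ
    have hinvmap : (walkMatrix (adjMat ℝ G))⁻¹ = (walkMatrix (adjMat ℚ G))⁻¹.map f := by
      apply Matrix.inv_eq_right_inv
      rw [hWGmap, ← Matrix.map_mul, Matrix.mul_nonsing_inv _ hWQunit]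
      simp [f]
    intro i j
    refine ⟨(walkMatrix (adjMat ℚ H) * (walkMatrix (adjMat ℚ G))⁻¹) j i, ?_⟩
    have : Q i j = Qᵀ j i := rfl
    rw [this, hQ, hWHmap, hinvmap, ← Matrix.map_mul]
    rfl
  · intro Q' h1 h2 h3
    have := formula Q' h1 h2 h3
    have : Q'ᵀ = Qᵀ := this.trans hQ.symm
    calc Q' = Q'ᵀᵀ := (Matrix.transpose_transpose Q').symm
      _ = Qᵀᵀ := by rw [this]
      _ = Q := Matrix.transpose_transpose Q
end

section
/- Let A be an n × n symmetric integer matrix with walk matrix W = [e, Ae, …, A^{n−1}e], λ₀ an integer, z₀ an integer vector, p a prime, τ ≥ 1, j ≥ 0. Assume Wᵀ z₀ ≡ 0 (mod p^τ). If an integer vector y satisfies (A − λ₀ I) y ≡ s p^j z₀ (mod p^{j+τ}) for some integer s, then Wᵀ y ≡ (eᵀ y) · (1, λ₀, λ₀², …, λ₀^{n−1})ᵀ (mod p^{j+τ}). -/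
open Matrix

/-!
Row `k` of `Wᵀ y` is `(Aᵏ e) ⬝ᵥ y`, and symmetry of `A` moves one factor of `A` onto `y`:
`(Aᵏ⁺¹ e) ⬝ᵥ y = λ₀ (Aᵏ e) ⬝ᵥ y + (Aᵏ e) ⬝ᵥ (A - λ₀ I) y`. Modulo `p^{j+τ}` the last term is
`s pʲ (Aᵏ e) ⬝ᵥ z₀`, which vanishes since `(Aᵏ e) ⬝ᵥ z₀` is a row of `Wᵀ z₀ ≡ 0 (mod p^τ)`;
induction on `k` then gives `(Aᵏ e) ⬝ᵥ y ≡ λ₀ᵏ eᵀ y`.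
-/

namespace Matrix

variable {ι R : Type*} [Fintype ι] [CommRing R]

theorem dvd_dotProduct_of_forall_dvd {m : R} (u : ι → R) {v : ι → R} (h : ∀ i, m ∣ v i) :
    m ∣ u ⬝ᵥ v :=
  Finset.dvd_sum fun i _ => (h i).mul_left (u i)

theorem mulVec_dotProduct_of_transpose_eq {A : Matrix ι ι R} (hA : Aᵀ = A) (u v : ι → R) :
    (A *ᵥ u) ⬝ᵥ v = u ⬝ᵥ (A *ᵥ v) := by
  rw [← vecMul_transpose, hA, dotProduct_mulVec]

theorem dvd_pow_mulVec_dotProduct_sub [DecidableEq ι] {A : Matrix ι ι R} (hA : Aᵀ = A)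
    {u y : ι → R} {lam m : R} (k : ℕ) (h : ∀ i < k, m ∣ (A ^ i *ᵥ u) ⬝ᵥ (A *ᵥ y - lam • y)) :
    m ∣ (A ^ k *ᵥ u) ⬝ᵥ y - (u ⬝ᵥ y) * lam ^ k := by
  induction k with
  | zero => simp
  | succ k ih =>
    have hstep : (A ^ (k + 1) *ᵥ u) ⬝ᵥ y - (u ⬝ᵥ y) * lam ^ (k + 1) =
        (A ^ k *ᵥ u) ⬝ᵥ (A *ᵥ y - lam • y) + lam * ((A ^ k *ᵥ u) ⬝ᵥ y - (u ⬝ᵥ y) * lam ^ k) := by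
      rw [pow_succ', ← mulVec_mulVec, mulVec_dotProduct_of_transpose_eq hA, dotProduct_sub,
        dotProduct_smul, smul_eq_mul]
      ring
    rw [hstep]
    exact dvd_add (h k k.lt_succ_self)
      ((ih fun i hi => h i (hi.trans k.lt_succ_self)).mul_left lam)

end Matrix

theorem transpose_walkMatrix_mulVec_apply {n : ℕ} {R : Type*} [CommRing R]
    (A : Matrix (Fin n) (Fin n) R) (v : Fin n → R) (r : Fin n) :
    ((walkMatrix A)ᵀ *ᵥ v) r = (A ^ (r : ℕ) *ᵥ 1) ⬝ᵥ v := by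
  simp [walkMatrix, mulVec, dotProduct]

theorem walkMatrix_congruence_of_near_eigenvector_general
    {n : ℕ} (p : ℕ) (τ j : ℕ)
    (A : Matrix (Fin n) (Fin n) ℤ) (hsymm : Aᵀ = A)
    (W : Matrix (Fin n) (Fin n) ℤ) (hW : W = walkMatrix A)
    (lam s : ℤ) (z₀ y : Fin n → ℤ)
    (hWz₀ : ∀ i, (p : ℤ) ^ τ ∣ (Wᵀ *ᵥ z₀) i)
    (hy : ∀ i, (p : ℤ) ^ (j + τ) ∣ (((A - lam • (1 : Matrix (Fin n) (Fin n) ℤ)) *ᵥ y - (s * (p : ℤ) ^ j) • z₀)) i) :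
    ∀ r : Fin n, (p : ℤ) ^ (j + τ) ∣ (Wᵀ *ᵥ y) r - (∑ i, y i) * lam ^ (r : ℕ) := by
  subst hW
  intro r
  set d := (A - lam • (1 : Matrix (Fin n) (Fin n) ℤ)) *ᵥ y - (s * (p : ℤ) ^ j) • z₀
  have hAy : A *ᵥ y - lam • y = (s * (p : ℤ) ^ j) • z₀ + d := by
    simp only [d, sub_mulVec, smul_mulVec, one_mulVec]
    abel
  rw [transpose_walkMatrix_mulVec_apply, ← one_dotProduct]
  refine dvd_pow_mulVec_dotProduct_sub hsymm _ fun i hi => ?_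
  have hz : (p : ℤ) ^ τ ∣ (A ^ i *ᵥ 1) ⬝ᵥ z₀ := hWz₀ ⟨i, hi.trans r.isLt⟩
  have hsz : (p : ℤ) ^ (j + τ) ∣ (s * (p : ℤ) ^ j) * ((A ^ i *ᵥ 1) ⬝ᵥ z₀) :=
    pow_add (p : ℤ) j τ ▸ mul_dvd_mul (dvd_mul_left _ s) hz
  rw [hAy, dotProduct_add, dotProduct_smul, smul_eq_mul]
  exact dvd_add hsz (dvd_dotProduct_of_forall_dvd _ hy)

/-- If `Wᵀ z₀ ≡ 0 (mod p^τ)` and `(A - λ₀ I) y ≡ s p^j z₀ (mod p^{j+τ})`, then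
`Wᵀ y ≡ (eᵀ y) (1, λ₀, …, λ₀^{n-1})ᵀ (mod p^{j+τ})`. -/
theorem walkMatrix_congruence_of_near_eigenvector
    {n : ℕ} (p : ℕ) (hp : p.Prime) (τ j : ℕ) (hτ : 1 ≤ τ)
    (A : Matrix (Fin n) (Fin n) ℤ) (hsymm : Aᵀ = A)
    (W : Matrix (Fin n) (Fin n) ℤ) (hW : W = walkMatrix A)
    (lam s : ℤ) (z₀ y : Fin n → ℤ)
    (hWz₀ : ∀ i, (p : ℤ) ^ τ ∣ (Wᵀ *ᵥ z₀) i)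
    (hy : ∀ i, (p : ℤ) ^ (j + τ) ∣ (((A - lam • (1 : Matrix (Fin n) (Fin n) ℤ)) *ᵥ y - (s * (p : ℤ) ^ j) • z₀)) i) :
    ∀ r : Fin n, (p : ℤ) ^ (j + τ) ∣ (Wᵀ *ᵥ y) r - (∑ i, y i) * lam ^ (r : ℕ) :=
  walkMatrix_congruence_of_near_eigenvector_general p τ j A hsymm W hW lam s z₀ y hWz₀ hy
end

section
/- Let A be an n × n symmetric integer matrix with walk matrix W, p an odd prime with rank_p W = n−1, τ ≥ 1, and suppose z₀ ≢ 0 (mod p) satisfies (A − λ₀ I) z₀ ≡ 0 (mod p^τ) and Wᵀ z₀ ≡ 0 (mod p) for some integer λ₀. Let diag(f_1, …, f_n) be the Smith normal form of A − λ₀ I over ℤ. Then p ∤ f_{n−2} and p^τ | f_n. -/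
open Matrix

private lemma snf_aux_part2 {n : ℕ} (hn : 3 ≤ n) (p : ℕ) (hp : p.Prime) (τ : ℕ)
    (B : Matrix (Fin n) (Fin n) ℤ)
    (z₀ : Fin n → ℤ) (hz₀p : ¬ (∀ i, (p : ℤ) ∣ z₀ i))
    (hAz₀ : ∀ i, (p : ℤ) ^ τ ∣ (B *ᵥ z₀) i)
    (f : Fin n → ℤ) (hchain : ∀ i j : Fin n, i ≤ j → f i ∣ f j)
    (U V : Matrix (Fin n) (Fin n) ℤ) (hU : IsUnit U.det) (hV : IsUnit V.det)
    (hUV : U * B * V = Matrix.diagonal f) :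
    (p : ℤ) ^ τ ∣ f ⟨n - 1, by omega⟩ := by
  haveI := V.invertibleOfIsUnitDet hV
  set w : Fin n → ℤ := V⁻¹ *ᵥ z₀ with hw
  have hVw : V *ᵥ w = z₀ := by
    rw [hw, Matrix.mulVec_mulVec, Matrix.mul_nonsing_inv _ hV, Matrix.one_mulVec]
  have hdw : ∀ i, (p : ℤ) ^ τ ∣ f i * w i := by
    intro i
    have : (Matrix.diagonal f) *ᵥ w = U *ᵥ (B *ᵥ z₀) := by
      rw [← hUV]
      rw [← Matrix.mulVec_mulVec, ← Matrix.mulVec_mulVec, hVw]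
    have h2 : ((Matrix.diagonal f) *ᵥ w) i = f i * w i := by
      simp [Matrix.mulVec_diagonal]
    rw [← h2, this, Matrix.mulVec]
    exact Finset.dvd_sum fun j _ => Dvd.dvd.mul_left (hAz₀ j) _
  have hwp : ∃ i, ¬ (p : ℤ) ∣ w i := by
    by_contra h
    push_neg at h
    apply hz₀p
    intro i
    rw [← hVw, Matrix.mulVec]
    exact Finset.dvd_sum fun j _ => Dvd.dvd.mul_left (h j) _
  obtain ⟨i, hi⟩ := hwp
  have hpi : Prime (p : ℤ) := Int.prime_iff_natAbs_prime.mpr (by simpa using hp)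
  have hcop : IsCoprime ((p:ℤ)^τ) (w i) :=
    (IsCoprime.pow_left ((hpi.coprime_iff_not_dvd).mpr hi))
  have : (p:ℤ)^τ ∣ f i := hcop.dvd_of_dvd_mul_right (hdw i)
  exact this.trans (hchain i ⟨n-1, by omega⟩ (by
    simp only [Fin.le_def]
    omega))


private lemma snf_aux_part1 {n : ℕ} (hn : 3 ≤ n) (p : ℕ) (hp : p.Prime)
    (A : Matrix (Fin n) (Fin n) ℤ) (hsymm : Aᵀ = A)
    (W : Matrix (Fin n) (Fin n) ℤ)
    (hW : ∀ i j : Fin n, W i j = ((A ^ (j : ℕ)) *ᵥ (fun _ => 1)) i)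
    (hrank : (W.map (Int.cast : ℤ → ZMod p)).rank = n - 1)
    (lam : ℤ)
    (f : Fin n → ℤ) (hchain : ∀ i j : Fin n, i ≤ j → f i ∣ f j)
    (U V : Matrix (Fin n) (Fin n) ℤ) (hU : IsUnit U.det) (hV : IsUnit V.det)
    (hUV : U * (A - lam • (1 : Matrix (Fin n) (Fin n) ℤ)) * V = Matrix.diagonal f) :
    ¬ (p : ℤ) ∣ f ⟨n - 3, by omega⟩ := by
  haveI : Fact p.Prime := ⟨hp⟩
  set F := ZMod p with hF
  set c : ℤ →+* F := Int.castRingHom F with hc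
  set Ab : Matrix (Fin n) (Fin n) F := A.map c with hAb
  set Bb : Matrix (Fin n) (Fin n) F := (A - lam • (1 : Matrix (Fin n) (Fin n) ℤ)).map c with hBbdef
  set Wb : Matrix (Fin n) (Fin n) F := W.map c with hWb
  set μ : F := c lam with hμ
  have hBb : Bb = Ab - μ • 1 := by
    ext i j
    show c ((A - lam • (1 : Matrix (Fin n) (Fin n) ℤ)) i j) = (Ab - μ • 1) i j
    rw [Matrix.sub_apply, Matrix.sub_apply, map_sub, Matrix.smul_apply, Matrix.smul_apply,
      Matrix.one_apply, Matrix.one_apply]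
    by_cases h : i = j <;> simp [h, hμ, hAb, Matrix.map_apply]
  -- symmetry of Ab
  have hAbsymm : Abᵀ = Ab := by
    rw [hAb, ← Matrix.transpose_map]
    rw [hsymm]
  -- kernel of Bb
  set K := LinearMap.ker Bb.mulVecLin with hK
  -- eigen equation for kernel elements
  have heig : ∀ z ∈ K, ∀ k : ℕ, (Ab ^ k) *ᵥ z = μ ^ k • z := by
    intro z hz
    have h1 : Ab *ᵥ z = μ • z := by
      have := hz
      rw [hK, LinearMap.mem_ker, Matrix.mulVecLin_apply, hBb, Matrix.sub_mulVec,
        Matrix.smul_mulVec, Matrix.one_mulVec, sub_eq_zero] at this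
      exact this
    intro k
    induction k with
    | zero => simp
    | succ k ih =>
        calc Ab ^ (k+1) *ᵥ z = Ab ^ k *ᵥ (Ab *ᵥ z) := by
              rw [pow_succ, ← Matrix.mulVec_mulVec]
          _ = μ ^ (k+1) • z := by
              rw [h1, Matrix.mulVec_smul, ih, smul_smul, pow_succ, mul_comm]
  -- the all-ones functional
  set e : Fin n → F := fun _ => 1 with he
  set φ : (Fin n → F) →ₗ[F] F :=
    { toFun := fun z => z ⬝ᵥ e
      map_add' := fun x y => add_dotProduct x y e
      map_smul' := fun r x => smul_dotProduct r x e } with hφ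
  -- kernel of Wbᵀ
  set N := LinearMap.ker (Wbᵀ).mulVecLin with hN
  have hNrank : Module.finrank F ↥N = 1 := by
    have h1 := LinearMap.finrank_range_add_finrank_ker (Wbᵀ).mulVecLin
    have h2 : Module.finrank F ↥(LinearMap.range (Wbᵀ).mulVecLin) = n - 1 := by
      have h3 : (Wbᵀ).rank = Wb.rank := Matrix.rank_transpose Wb
      have h4 : Wb = W.map (Int.cast : ℤ → ZMod p) := rfl
      rw [h4, hrank] at h3
      exact h3
    rw [h2, Module.finrank_pi] at h1
    simp only [Fintype.card_fin] at h1
    rw [hN]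
    omega
  -- columns of Wb
  have hWcol : ∀ j : Fin n, (fun i => Wb i j) = (Ab ^ (j:ℕ)) *ᵥ e := by
    intro j
    funext i
    have : Wb i j = c (W i j) := rfl
    rw [this, hW i j]
    have hmp : (A ^ (j:ℕ)).map c = Ab ^ (j:ℕ) := by
      rw [hAb, ← RingHom.mapMatrix_apply, ← RingHom.mapMatrix_apply, map_pow]
    rw [Matrix.mulVec, dotProduct]
    rw [← hmp]
    simp [Matrix.mulVec, dotProduct, Matrix.map_apply, he]
  -- K ⊓ ker φ ≤ N
  have hle : K ⊓ LinearMap.ker φ ≤ N := by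
    intro z hz
    obtain ⟨hz1, hz2⟩ := Submodule.mem_inf.mp hz
    rw [LinearMap.mem_ker, hφ] at hz2
    simp only [LinearMap.coe_mk, AddHom.coe_mk] at hz2
    rw [hN, LinearMap.mem_ker, Matrix.mulVecLin_apply]
    funext j
    have : (Wbᵀ *ᵥ z) j = (fun i => Wb i j) ⬝ᵥ z := rfl
    rw [this, hWcol j]
    rw [dotProduct_comm]
    have : z ⬝ᵥ ((Ab ^ (j:ℕ)) *ᵥ e) = (z ᵥ* (Ab ^ (j:ℕ))) ⬝ᵥ e :=
      Matrix.dotProduct_mulVec z _ e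
    rw [this]
    have hvm : z ᵥ* (Ab ^ (j:ℕ)) = (Ab ^ (j:ℕ)) *ᵥ z := by
      conv_lhs => rw [← hAbsymm, ← Matrix.transpose_pow, Matrix.vecMul_transpose]
    rw [hvm, heig z hz1 (j:ℕ), smul_dotProduct, hz2, smul_zero]
    simp
  -- finrank K ≤ 2
  have hK2 : Module.finrank F ↥K ≤ 2 := by
    set ψ := φ.comp K.subtype with hψ
    have h1 := LinearMap.finrank_range_add_finrank_ker ψ
    have h2 : Module.finrank F ↥(LinearMap.range ψ) ≤ 1 := by
      have := Submodule.finrank_le (LinearMap.range ψ)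
      rwa [Module.finrank_self] at this
    have h3 : Module.finrank F ↥(LinearMap.ker ψ) = Module.finrank F ↥(K ⊓ LinearMap.ker φ : Submodule F (Fin n → F)) := by
      rw [hψ, LinearMap.ker_comp, ← Submodule.map_comap_subtype K (LinearMap.ker φ),
        Submodule.finrank_map_subtype_eq]
    have h4 : Module.finrank F ↥(K ⊓ LinearMap.ker φ : Submodule F (Fin n → F)) ≤ 1 := by
      rw [← hNrank]
      exact Submodule.finrank_mono hle
    omega
  -- rank of Bb ≥ n - 2
  have hBrank : n - 2 ≤ Bb.rank := by
    have h1 := LinearMap.finrank_range_add_finrank_ker Bb.mulVecLin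
    have h2 : Module.finrank F ↥(LinearMap.range Bb.mulVecLin) = Bb.rank := rfl
    have h3 : Module.finrank F ↥(LinearMap.ker Bb.mulVecLin) = Module.finrank F ↥K := rfl
    rw [h2, h3, Module.finrank_pi] at h1
    simp only [Fintype.card_fin] at h1
    omega
  -- rank of diagonal
  set fb : Fin n → F := fun i => c (f i) with hfb
  have hdiag : (Matrix.diagonal fb).rank = Bb.rank := by
    have hmap : (U.map c) * Bb * (V.map c) = Matrix.diagonal fb := by
      rw [hBbdef, ← RingHom.mapMatrix_apply, ← RingHom.mapMatrix_apply, ← RingHom.mapMatrix_apply,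
        ← _root_.map_mul, ← _root_.map_mul, hUV, RingHom.mapMatrix_apply,
        Matrix.diagonal_map (map_zero c)]
    rw [← hmap]
    rw [Matrix.rank_mul_eq_left_of_isUnit_det _ _ (by rw [← RingHom.mapMatrix_apply, ← RingHom.map_det]; exact hV.map c),
      Matrix.rank_mul_eq_right_of_isUnit_det _ _ (by rw [← RingHom.mapMatrix_apply, ← RingHom.map_det]; exact hU.map c)]
  -- conclude
  intro hdvd
  have hzero : ∀ i : Fin n, (n - 3 : ℕ) ≤ (i : ℕ) → fb i = 0 := by
    intro i hi
    rw [hfb]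
    have : (p:ℤ) ∣ f i := hdvd.trans (hchain ⟨n-3, by omega⟩ i (by simp only [Fin.le_def]; omega))
    exact (ZMod.intCast_zmod_eq_zero_iff_dvd (f i) p).mpr this
  have hcard : (Matrix.diagonal fb).rank = Fintype.card {i // fb i ≠ 0} :=
    Matrix.rank_diagonal fb
  have hcompl : Fintype.card {i // fb i ≠ 0} = n - Fintype.card {i // fb i = 0} := by
    have := Fintype.card_subtype_compl (fun i => fb i = 0)
    simpa using this
  have h3le : 3 ≤ Fintype.card {i // fb i = 0} := by
    rw [Fintype.card_subtype]
    have hsub : ({⟨n-3, by omega⟩, ⟨n-2, by omega⟩, ⟨n-1, by omega⟩} : Finset (Fin n)) ⊆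
        Finset.univ.filter (fun i => fb i = 0) := by
      intro i hi
      simp only [Finset.mem_insert, Finset.mem_singleton] at hi
      rw [Finset.mem_filter]
      refine ⟨Finset.mem_univ _, hzero i ?_⟩
      rcases hi with h | h | h <;> subst h <;> simp <;> omega
    calc 3 = ({⟨n-3, by omega⟩, ⟨n-2, by omega⟩, ⟨n-1, by omega⟩} : Finset (Fin n)).card := by
              rw [Finset.card_insert_of_notMem, Finset.card_insert_of_notMem,
                Finset.card_singleton] <;> simp [Fin.ext_iff] <;> omega
      _ ≤ _ := Finset.card_le_card hsub
  have hcardle : Fintype.card {i // fb i = 0} ≤ n := by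
    simpa using Fintype.card_subtype_le (fun i => fb i = 0)
  rw [hcard, hcompl] at hdiag
  omega

/-- Let `diag(f_1, …, f_n)` be the Smith normal form of `A - λ₀ I` over `ℤ`.
Under the stated hypotheses, `p ∤ f_{n-2}` and `p^τ ∣ f_n`. -/
theorem snf_of_A_sub_lambda
    {n : ℕ} (hn : 3 ≤ n) (p : ℕ) (hp : p.Prime) (hodd : Odd p) (τ : ℕ) (hτ : 1 ≤ τ)
    (A : Matrix (Fin n) (Fin n) ℤ) (hsymm : Aᵀ = A)
    (W : Matrix (Fin n) (Fin n) ℤ) (hW : W = walkMatrix A)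
    (hrank : (W.map (Int.cast : ℤ → ZMod p)).rank = n - 1)
    (lam : ℤ) (z₀ : Fin n → ℤ) (hz₀p : ¬ (∀ i, (p : ℤ) ∣ z₀ i))
    (hAz₀ : ∀ i, (p : ℤ) ^ τ ∣ ((A - lam • (1 : Matrix (Fin n) (Fin n) ℤ)) *ᵥ z₀) i)
    (hWz₀ : ∀ i, (p : ℤ) ∣ (Wᵀ *ᵥ z₀) i)
    (f : Fin n → ℤ) (hchain : ∀ i j : Fin n, i ≤ j → f i ∣ f j)
    (hsnf : ∃ U V : Matrix (Fin n) (Fin n) ℤ, IsUnit U.det ∧ IsUnit V.det ∧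
      U * (A - lam • (1 : Matrix (Fin n) (Fin n) ℤ)) * V = Matrix.diagonal f) :
    ¬ (p : ℤ) ∣ f ⟨n - 3, by omega⟩ ∧ (p : ℤ) ^ τ ∣ f ⟨n - 1, by omega⟩ := by
  obtain ⟨U, V, hU, hV, hUV⟩ := hsnf
  have hW' : ∀ i j : Fin n, W i j = ((A ^ (j : ℕ)) *ᵥ (fun _ => 1)) i := by
    intro i j; rw [hW]; rfl
  exact ⟨snf_aux_part1 hn p hp A hsymm W hW' hrank lam f hchain U V hU hV hUV,
    snf_aux_part2 hn p hp τ _ z₀ hz₀p hAz₀ f hchain U V hU hV hUV⟩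
end

section
/- Let p be a prime, τ ≥ 1, W an n × n integer matrix with rank n−1 over ℤ/pℤ, and suppose there exists an integer vector u with u ≢ 0 (mod p) and Wᵀ u ≡ 0 (mod p^{2τ}). Then p^{2τ} divides det W. -/
open Matrix

/-- If `W` is an `n × n` integer matrix of rank `n-1` over `ℤ/pℤ` and there is
an integer vector `u ≢ 0 (mod p)` with `Wᵀ u ≡ 0 (mod p^{2τ})`, then
`p^{2τ} ∣ det W`. -/
theorem pow_dvd_det_of_primitive_kernel_vector
    {n : ℕ} (p : ℕ) (hp : p.Prime) (τ : ℕ) (hτ : 1 ≤ τ)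
    (W : Matrix (Fin n) (Fin n) ℤ)
    (hrank : (W.map (Int.cast : ℤ → ZMod p)).rank = n - 1)
    (u : Fin n → ℤ) (hu : ¬ (∀ i, (p : ℤ) ∣ u i))
    (hWu : ∀ i, (p : ℤ) ^ (2 * τ) ∣ (Wᵀ *ᵥ u) i) :
    (p : ℤ) ^ (2 * τ) ∣ W.det := by
  push_neg at hu
  obtain ⟨i, hi⟩ := hu
  have hprime : Prime (p : ℤ) := Nat.prime_iff_prime_int.mp hp
  have hcop : IsCoprime ((p : ℤ) ^ (2 * τ)) (u i) :=
    (IsCoprime.pow_left ((hprime.coprime_iff_not_dvd).mpr hi))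
  have key : (adjugate Wᵀ *ᵥ (Wᵀ *ᵥ u)) = W.det • u := by
    rw [mulVec_mulVec, adjugate_mul, det_transpose, smul_mulVec, one_mulVec]
  have hdvd : (p : ℤ) ^ (2 * τ) ∣ W.det * u i := by
    have : (p : ℤ) ^ (2 * τ) ∣ (adjugate Wᵀ *ᵥ (Wᵀ *ᵥ u)) i := by
      simp only [mulVec, dotProduct]
      exact Finset.dvd_sum fun j _ => Dvd.dvd.mul_left (hWu j) _
    rw [key] at this
    simpa using this
  exact hcop.dvd_of_dvd_mul_right hdvd
end
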